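/- arXiv:2201.01522 — 11 statements merged into one kernel-verified Lean document; each statement's English description precedes it below -/
import Mathlib

section
/- Let f : (0,∞) → (0,∞) be measurable with f locally integrable on [0,∞) and f(t) > 0 for a.e. t, and define F(t) = ∫₀ᵗ f(s) ds for t > 0. If f is regularly varying at 0 with index ρ ∈ (−1,∞), then F is regularly varying at 0 with index ρ+1, and moreover F(t) ∼ t·f(t)/(ρ+1) as t → 0⁺, i.e. lim_{t→0⁺} F(t)·(ρ+1)/(t·f(t)) = 1. -/
/-!
`F (l t) = l ∫₀ᵗ f (l s) ds` and `f (l s) / f s → l ^ ρ`, so `F (l t) / F t → l ^ (ρ + 1)`.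

For the asymptotics of `F t / (t f t)` we need the uniform convergence theorem: in the variable
`x = -log t`, the function `k x = log f(e⁻ˣ) + ρ x` satisfies `k (x + v) - k x → 0` for each `v`,
and since `k` is measurable, a Steinhaus-type measure argument makes this uniform for `v` in
compacts. Hence `(F t - F (t / 2)) / (t f t) = ∫_{1/2}^1 f (u t) / f t du → ∫_{1/2}^1 u ^ ρ du
= (1 - 2 ^ (-(ρ + 1))) / (ρ + 1)`, while `F (t / 2) / F t → 2 ^ (-(ρ + 1))` by the first claim;
dividing gives `F t / (t f t) → 1 / (ρ + 1)`.
-/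

open MeasureTheory Filter Set Topology Real

noncomputable section

/-- `f : (0,∞) → (0,∞)` is regularly varying at `0` with index `ρ`:
for every `λ > 0`, `f(λt)/f(t) → λ^ρ` as `t → 0⁺`. -/
def RegVaryAt0 (f : ℝ → ℝ) (ρ : ℝ) : Prop :=
  ∀ l : ℝ, 0 < l →
    Tendsto (fun t => f (l * t) / f t) (𝓝[>] (0:ℝ)) (𝓝 (l ^ ρ))

theorem exists_mem_notMem_and_add_notMem {G : Type*} [MeasurableSpace G] [AddGroup G]
    [MeasurableAdd G] {μ : Measure G} [μ.IsAddLeftInvariant] {s A B : Set G}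
    (h : μ A + μ B < μ s) (g : G) : ∃ t ∈ s, t ∉ A ∧ g + t ∉ B := by
  by_contra! hcover
  have hs : s ⊆ A ∪ (g + ·) ⁻¹' B := fun t ht => by
    by_cases htA : t ∈ A
    · exact Or.inl htA
    · exact Or.inr (hcover t ht htA)
  refine h.not_ge ((measure_mono hs).trans ?_)
  exact (measure_union_le _ _).trans_eq (by rw [measure_preimage_add])

theorem tendsto_volume_setOf_le_abs_add_sub {k : ℝ → ℝ} (hk : Measurable k)
    (hlim : ∀ v, Tendsto (fun x => k (x + v) - k x) atTop (𝓝 0)) (C : ℝ) {δ : ℝ} (hδ : 0 < δ) :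
    Tendsto (fun x => volume {t ∈ Icc (-C) C | δ ≤ |k (x + t) - k x|}) atTop (𝓝 0) := by
  have hmeas : ∀ x, MeasurableSet {t ∈ Icc (-C) C | δ ≤ |k (x + t) - k x|} := fun x =>
    measurableSet_Icc.inter (measurableSet_le measurable_const
      (g := fun t => |k (x + t) - k x|) (by fun_prop))
  have hsmall : ∀ t, ∀ᶠ x in atTop, |k (x + t) - k x| < δ := fun t => by
    simpa using (hlim t).abs.eventually (gt_mem_nhds (by simpa using hδ))
  simpa using tendsto_measure_of_ae_tendsto_indicator atTop MeasurableSet.empty hmeas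
    measurableSet_Icc measure_Icc_lt_top.ne (.of_forall fun _ => sep_subset _ _)
    (.of_forall fun t => (hsmall t).mono fun x hx => by simp [hx])

theorem tendstoUniformlyOn_add_sub_of_measurable {k : ℝ → ℝ} (hk : Measurable k)
    (hlim : ∀ v, Tendsto (fun x => k (x + v) - k x) atTop (𝓝 0)) {C : ℝ} (hC : 0 < C) :
    TendstoUniformlyOn (fun x v => k (x + v) - k x) 0 atTop (Icc (-C) C) := by
  rw [Metric.tendstoUniformlyOn_iff]
  intro ε hε
  set bad : ℝ → Set ℝ := fun x => {t ∈ Icc (-(2 * C)) (2 * C) | ε / 2 ≤ |k (x + t) - k x|}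
  obtain ⟨N, hN⟩ := eventually_atTop.1 <|
    (tendsto_volume_setOf_le_abs_add_sub hk hlim (2 * C) (half_pos hε)).eventually
      (gt_mem_nhds (ENNReal.ofReal_pos.2 hC))
  filter_upwards [eventually_ge_atTop (N + C)] with x hx v hv
  have hvol : volume (bad (x + v)) + volume (bad x) < volume (Icc (-C) C) := by
    rw [Real.volume_Icc, show C - -C = C + C by ring, ENNReal.ofReal_add hC.le hC.le]
    exact ENNReal.add_lt_add (hN _ (by linarith [hv.1])) (hN _ (by linarith))
  -- The bad sets of `x` and `x + v` are too small to cover a shifted copy of `[-C, C]`, so some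
  -- `s` is good for both, and then `k (x + v)` and `k x` are both close to `k (x + v + s)`.
  obtain ⟨s, hs, hs₁, hs₂⟩ := exists_mem_notMem_and_add_notMem hvol v
  have hs₁' : |k (x + v + s) - k (x + v)| < ε / 2 :=
    not_le.1 fun h => hs₁ ⟨⟨by linarith [hs.1], by linarith [hs.2]⟩, h⟩
  have hs₂' : |k (x + (v + s)) - k x| < ε / 2 :=
    not_le.1 fun h => hs₂ ⟨⟨by linarith [hs.1, hv.1], by linarith [hs.2, hv.2]⟩, h⟩
  rw [← add_assoc] at hs₂'
  rw [Pi.zero_apply, dist_zero_left, Real.norm_eq_abs]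
  calc |k (x + v) - k x| ≤ |k (x + v + s) - k (x + v)| + |k (x + v + s) - k x| := by
        rw [abs_sub_comm (k (x + v + s))]; exact abs_sub_le _ _ _
    _ < ε := by linarith

theorem TendstoUniformlyOn.mul_exp {ι α : Type*} {p : Filter ι} {s : Set α} {g : α → ℝ}
    {d : ι → α → ℝ} {M : ℝ} (hg : ∀ x ∈ s, |g x| ≤ M) (hd : TendstoUniformlyOn d 0 p s) :
    TendstoUniformlyOn (fun n x => g x * exp (d n x)) g p s := by
  rw [Metric.tendstoUniformlyOn_iff] at hd ⊢
  intro ε hε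
  have hM : 0 < |M| + 1 := by positivity
  filter_upwards [hd (min 1 (ε / (2 * (|M| + 1)))) (lt_min one_pos (by positivity))]
    with n hn x hx
  have hdx := hn x hx
  rw [Pi.zero_apply, dist_zero_left, Real.norm_eq_abs, lt_min_iff] at hdx
  rw [Real.dist_eq, ← mul_one_sub, abs_mul, abs_sub_comm]
  calc |g x| * |exp (d n x) - 1| ≤ (|M| + 1) * (2 * |d n x|) :=
        mul_le_mul (by linarith [hg x hx, le_abs_self M]) (abs_exp_sub_one_le hdx.1.le)
          (abs_nonneg _) hM.le
    _ < (|M| + 1) * (2 * (ε / (2 * (|M| + 1)))) := by gcongr; exact hdx.2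
    _ = ε := by field_simp

theorem tendsto_integral_div_integral_of_tendsto_div {f g : ℝ → ℝ} {c : ℝ}
    (hpos : ∀ t > (0:ℝ), 0 < f t) (hf : ∀ t > (0:ℝ), IntervalIntegrable f volume 0 t)
    (hg : ∀ t > (0:ℝ), IntervalIntegrable g volume 0 t)
    (hgf : Tendsto (fun t => g t / f t) (𝓝[>] 0) (𝓝 c)) :
    Tendsto (fun t => (∫ s in 0..t, g s) / ∫ s in 0..t, f s) (𝓝[>] 0) (𝓝 c) := by
  rw [Metric.tendsto_nhds]
  intro ε hε
  obtain ⟨δ, hδ, hclose⟩ := (nhdsGT_basis (0:ℝ)).mem_iff.1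
    (Metric.tendsto_nhds.1 hgf (ε / 2) (half_pos hε))
  filter_upwards [Ioo_mem_nhdsGT hδ] with t ht
  have hI : 0 < ∫ s in 0..t, f s :=
    intervalIntegral.intervalIntegral_pos_of_pos_on (hf t ht.1) (fun s hs => hpos s hs.1) ht.1
  have hpointwise : ∀ s ∈ Ioc 0 t, ‖g s - c * f s‖ ≤ ε / 2 * f s := fun s hs => by
    have hs' : dist (g s / f s) c < ε / 2 := hclose ⟨hs.1, hs.2.trans_lt ht.2⟩
    rw [Real.dist_eq, div_sub' (hpos s hs.1).ne', abs_div,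
      abs_of_pos (hpos s hs.1), div_lt_iff₀ (hpos s hs.1)] at hs'
    rw [Real.norm_eq_abs, mul_comm c]
    exact hs'.le
  have hdiff : |(∫ s in 0..t, g s) - c * ∫ s in 0..t, f s| ≤ ε / 2 * ∫ s in 0..t, f s := by
    rw [← intervalIntegral.integral_const_mul, ← intervalIntegral.integral_const_mul,
      ← intervalIntegral.integral_sub (hg t ht.1) ((hf t ht.1).const_mul c)]
    exact intervalIntegral.norm_integral_le_of_norm_le ht.1.le
      (.of_forall hpointwise) ((hf t ht.1).const_mul _)
  rw [Real.dist_eq, div_sub' hI.ne', abs_div, abs_of_pos hI, div_lt_iff₀ hI, mul_comm _ c]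
  exact hdiff.trans_lt (mul_lt_mul_of_pos_right (half_lt_self hε) hI)

namespace RegVaryAt0

variable {f F : ℝ → ℝ} {ρ : ℝ}

theorem tendstoUniformlyOn (hrv : RegVaryAt0 f ρ) (hmeas : Measurable f)
    (hpos : ∀ t > (0:ℝ), 0 < f t) {a b : ℝ} (ha : 0 < a) :
    TendstoUniformlyOn (fun t l => f (l * t) / f t) (fun l => l ^ ρ) (𝓝[>] 0) (Icc a b) := by
  set k : ℝ → ℝ := fun x => log (f (exp (-x))) + ρ * x
  have hk_sub : ∀ x v, k (x + v) - k x = log (f (exp (-v) * exp (-x)) / f (exp (-x))) + ρ * v :=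
    fun x v => by
      simp only [k]
      rw [log_div (hpos _ (by positivity)).ne' (hpos _ (exp_pos _)).ne', ← exp_add, neg_add']
      ring_nf
  have hlim : ∀ v, Tendsto (fun x => k (x + v) - k x) atTop (𝓝 0) := fun v => by
    have hexp : Tendsto (fun x => exp (-x)) atTop (𝓝[>] 0) := tendsto_nhdsWithin_iff.2
      ⟨tendsto_exp_atBot.comp tendsto_neg_atTop_atBot, .of_forall fun _ => exp_pos _⟩
    have := (((hrv _ (exp_pos (-v))).comp hexp).log
      (rpow_pos_of_pos (exp_pos _) _).ne').add_const (ρ * v)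
    rw [log_rpow (exp_pos _), log_exp] at this
    simp_rw [hk_sub]
    simpa using this
  have hratio : ∀ t > (0:ℝ), ∀ l > (0:ℝ),
      l ^ ρ * exp (k (-log t + -log l) - k (-log t)) = f (l * t) / f t := fun t ht l hl => by
    rw [hk_sub, neg_neg, neg_neg, exp_log hl, exp_log ht,
      exp_add, exp_log (div_pos (hpos _ (by positivity)) (hpos _ ht)), rpow_def_of_pos hl,
      mul_left_comm, ← exp_add, show log l * ρ + ρ * -log l = 0 by ring, exp_zero, mul_one]
  set C := |log a| + |log b| + 1
  have hU := Metric.tendstoUniformlyOn_iff.1 <| tendstoUniformlyOn_add_sub_of_measurable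
    (by fun_prop : Measurable k) hlim (by positivity : 0 < C)
  have hlog : Tendsto (fun t => -log t) (𝓝[>] 0) atTop :=
    tendsto_neg_atBot_atTop.comp tendsto_log_nhdsGT_zero
  have hmem : ∀ l ∈ Icc a b, -log l ∈ Icc (-C) C := fun l hl => by
    have h₁ := log_le_log ha hl.1
    have h₂ := log_le_log (ha.trans_le hl.1) hl.2
    constructor <;>
      linarith [le_abs_self (log b), neg_abs_le (log a), abs_nonneg (log a), abs_nonneg (log b)]
  have hD : TendstoUniformlyOn (fun t l => k (-log t + -log l) - k (-log t)) 0 (𝓝[>] 0)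
      (Icc a b) := Metric.tendstoUniformlyOn_iff.2 fun ε hε => by
    filter_upwards [hlog.eventually (hU ε hε)] with t ht l hl using ht _ (hmem l hl)
  obtain ⟨M, hM⟩ : ∃ M, ∀ l ∈ Icc a b, |l ^ ρ| ≤ M :=
    isCompact_Icc.exists_bound_of_continuousOn
      (continuousOn_id.rpow_const fun l hl => Or.inl (ha.trans_le hl.1).ne')
  refine (hD.mul_exp hM).congr ?_
  filter_upwards [self_mem_nhdsWithin] with t ht l hl using hratio t ht l (ha.trans_le hl.1)

theorem tendsto_intervalIntegral_div (hrv : RegVaryAt0 f ρ) (hmeas : Measurable f)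
    (hpos : ∀ t > (0:ℝ), 0 < f t) {a b : ℝ} (ha : 0 < a) (hb : 0 < b) :
    Tendsto (fun t => ∫ u in a..b, f (u * t) / f t) (𝓝[>] 0) (𝓝 (∫ u in a..b, u ^ ρ)) := by
  have hmin : 0 < min a b := lt_min ha hb
  have hU := Metric.tendstoUniformlyOn_iff.1
    (hrv.tendstoUniformlyOn hmeas hpos hmin (b := max a b)) 1 one_pos
  refine intervalIntegral.tendsto_integral_filter_of_dominated_convergence (fun u => |u ^ ρ| + 1)
    (.of_forall fun t => ((hmeas.comp (by fun_prop)).div_const _).aestronglyMeasurable) ?_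
    ((continuousOn_id.rpow_const fun u hu => Or.inl (hmin.trans_le hu.1).ne').abs.add
      continuousOn_const).intervalIntegrable
    (.of_forall fun u hu => hrv u (hmin.trans_le (uIoc_subset_uIcc hu).1))
  filter_upwards [hU] with t ht
  refine .of_forall fun u hu => ?_
  have hdist := ht u (uIoc_subset_uIcc hu)
  rw [Real.dist_eq] at hdist
  rw [Real.norm_eq_abs]
  linarith [abs_sub_abs_le_abs_sub (f (u * t) / f t) (u ^ ρ),
    abs_sub_comm (u ^ ρ) (f (u * t) / f t)]

theorem primitive (hrv : RegVaryAt0 f ρ) (hpos : ∀ t > (0:ℝ), 0 < f t)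
    (hint : ∀ t > (0:ℝ), IntervalIntegrable f volume 0 t)
    (hF : ∀ t > (0:ℝ), F t = ∫ s in 0..t, f s) : RegVaryAt0 F (ρ + 1) := by
  intro l hl
  have hint_comp : ∀ t > (0:ℝ), IntervalIntegrable (fun s => f (l * s)) volume 0 t :=
    fun t ht => by
      simpa [hl.ne'] using (hint (l * t) (by positivity)).comp_mul_left (c := l)
  have hratio := (tendsto_integral_div_integral_of_tendsto_div hpos hint hint_comp
    (hrv l hl)).const_mul l
  rw [mul_comm, ← rpow_add_one hl.ne' ρ] at hratio
  refine hratio.congr' ?_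
  filter_upwards [self_mem_nhdsWithin] with t ht
  have hscale : ∫ s in 0..l * t, f s = l * ∫ s in 0..t, f (l * s) := by
    rw [intervalIntegral.mul_integral_comp_mul_left, mul_zero]
  rw [hF t ht, hF (l * t) (mul_pos hl ht), hscale, mul_div_assoc]

theorem tendsto_primitive_mul_div (hrv : RegVaryAt0 f ρ) (hmeas : Measurable f)
    (hpos : ∀ t > (0:ℝ), 0 < f t) (hint : ∀ t > (0:ℝ), IntervalIntegrable f volume 0 t)
    (hρ : -1 < ρ) (hF : ∀ t > (0:ℝ), F t = ∫ s in 0..t, f s) :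
    Tendsto (fun t => F t * (ρ + 1) / (t * f t)) (𝓝[>] 0) (𝓝 1) := by
  set q := 1 - (1 / 2 : ℝ) ^ (ρ + 1)
  have hρ₁ : 0 < ρ + 1 := by linarith
  have hq : q ≠ 0 := (sub_pos.2 (rpow_lt_one (by norm_num) (by norm_num) hρ₁)).ne'
  have hD : Tendsto (fun t => ∫ u in (1 / 2 : ℝ)..1, f (u * t) / f t) (𝓝[>] 0)
      (𝓝 (q / (ρ + 1))) := by
    have := hrv.tendsto_intervalIntegral_div hmeas hpos (by norm_num : (0:ℝ) < 1 / 2) one_pos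
    rwa [integral_rpow (Or.inl hρ), one_rpow] at this
  have hA : Tendsto (fun t => 1 - F (1 / 2 * t) / F t) (𝓝[>] 0) (𝓝 q) :=
    (hrv.primitive hpos hint hF (1 / 2) (by norm_num)).const_sub 1
  have hlim := (hD.div hA hq).mul_const (ρ + 1)
  rw [show q / (ρ + 1) / q * (ρ + 1) = 1 by field_simp] at hlim
  refine hlim.congr' ?_
  filter_upwards [self_mem_nhdsWithin, hA.eventually_ne hq] with t (ht : 0 < t) hqt
  have hFt : 0 < F t := hF t ht ▸
    intervalIntegral.intervalIntegral_pos_of_pos_on (hint t ht) (fun s hs => hpos s hs.1) ht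
  have hscale : ∫ s in 1 / 2 * t..t, f s = t * ∫ u in (1 / 2 : ℝ)..1, f (u * t) := by
    rw [intervalIntegral.mul_integral_comp_mul_right, one_mul]
  have hdiff : ∫ u in (1 / 2 : ℝ)..1, f (u * t) = (F t - F (1 / 2 * t)) / t := by
    rw [hF t ht, hF _ (by positivity),
      intervalIntegral.integral_interval_sub_left (hint t ht) (hint _ (by positivity)), hscale,
      mul_div_cancel_left₀ _ ht.ne']
  have hnum : F t - F (1 / 2 * t) ≠ 0 := by
    rw [one_sub_div hFt.ne'] at hqt
    exact left_ne_zero_of_mul (div_eq_mul_inv _ (F t) ▸ hqt)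
  have hft := (hpos t ht).ne'
  rw [Pi.div_apply, intervalIntegral.integral_div, hdiff, one_sub_div hFt.ne']
  generalize F t - F (1 / 2 * t) = D at hnum ⊢
  field_simp

end RegVaryAt0

theorem stmt0 (f : ℝ → ℝ) (ρ : ℝ)
    (hmeas : Measurable f)
    (hpos : ∀ t > (0:ℝ), 0 < f t)
    (hint : ∀ x > (0:ℝ), IntegrableOn f (Ioc 0 x))
    (hρ : -1 < ρ)
    (hrv : RegVaryAt0 f ρ)
    (F : ℝ → ℝ) (hF : ∀ t > (0:ℝ), F t = ∫ s in Ioc (0:ℝ) t, f s) :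
    RegVaryAt0 F (ρ + 1) ∧
      Tendsto (fun t => F t * (ρ + 1) / (t * f t)) (𝓝[>] (0:ℝ)) (𝓝 1) := by
  have hint' : ∀ t > (0:ℝ), IntervalIntegrable f volume 0 t := fun t ht =>
    (intervalIntegrable_iff_integrableOn_Ioc_of_le ht.le).2 (hint t ht)
  have hF' : ∀ t > (0:ℝ), F t = ∫ s in 0..t, f s := fun t ht =>
    (hF t ht).trans (intervalIntegral.integral_of_le ht.le).symm
  exact ⟨hrv.primitive hpos hint' hF', hrv.tendsto_primitive_mul_div hmeas hpos hint' hρ hF'⟩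
end
end

section
/- Let f : (0,∞) → (0,∞) be measurable with f locally integrable on [0,∞) and f(t) > 0 for a.e. t, and define F(t) = ∫₀ᵗ f(s) ds for t > 0. If f is rapidly varying at 0 (index ∞), then F is rapidly varying at 0 (index ∞). -/
open MeasureTheory Filter Set Topology Real

noncomputable section

/-- `f : (0,∞) → (0,∞)` is rapidly varying at `0` (index `∞`):
for every `λ ∈ (0,1)`, `f(λt)/f(t) → 0` as `t → 0⁺`, and for every `λ > 1`,
`f(λt)/f(t) → ∞` as `t → 0⁺`. -/
def RapidVaryAt0 (f : ℝ → ℝ) : Prop :=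
  (∀ l : ℝ, l ∈ Ioo (0:ℝ) 1 →
      Tendsto (fun t => f (l * t) / f t) (𝓝[>] (0:ℝ)) (𝓝 0)) ∧
  (∀ l : ℝ, 1 < l →
      Tendsto (fun t => f (l * t) / f t) (𝓝[>] (0:ℝ)) atTop)

theorem stmt1 (f : ℝ → ℝ)
    (hmeas : Measurable f)
    (hpos : ∀ t > (0:ℝ), 0 < f t)
    (hint : ∀ x > (0:ℝ), IntegrableOn f (Ioc 0 x))
    (hrv : RapidVaryAt0 f)
    (F : ℝ → ℝ) (hF : ∀ t > (0:ℝ), F t = ∫ s in Ioc (0:ℝ) t, f s) :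
    RapidVaryAt0 F := by
  -- positivity of F
  have hFpos : ∀ t > (0:ℝ), 0 < F t := by
    intro t ht
    rw [hF t ht]
    rw [setIntegral_pos_iff_support_of_nonneg_ae
      (((ae_restrict_iff' measurableSet_Ioc).mpr
        (Filter.Eventually.of_forall fun u hu => (hpos u hu.1).le))) (hint t ht)]
    refine lt_of_lt_of_le ?_ (measure_mono (show Ioc (0:ℝ) t ⊆ _ from fun u hu =>
      ⟨(hpos u hu.1).ne', hu⟩))
    simp [ht]
  -- scaling identity
  have hscale : ∀ c > (0:ℝ), ∀ t > (0:ℝ),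
      ∫ u in Ioc (0:ℝ) t, f (c * u) = c⁻¹ * F (c * t) := by
    intro c hc t ht
    have h1 : (0:ℝ) ≤ t := ht.le
    have h2 : (0:ℝ) ≤ c * t := by positivity
    rw [hF (c * t) (by positivity), ← intervalIntegral.integral_of_le h1,
      ← intervalIntegral.integral_of_le h2,
      intervalIntegral.integral_comp_mul_left f hc.ne', mul_zero, smul_eq_mul]
  -- main case: l > 1
  have main : ∀ l : ℝ, 1 < l →
      Tendsto (fun t => F (l * t) / F t) (𝓝[>] (0:ℝ)) atTop := by
    intro l hl
    have hl0 : (0:ℝ) < l := lt_trans one_pos hl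
    rw [tendsto_atTop]
    intro b
    set B : ℝ := max b 0 with hB
    have hB0 : 0 ≤ B := le_max_right _ _
    have hev : ∀ᶠ u in 𝓝[>] (0:ℝ), B ≤ f (l * u) / f u :=
      (hrv.2 l hl).eventually (eventually_ge_atTop B)
    obtain ⟨δ, hδmem, hδ⟩ := mem_nhdsGT_iff_exists_Ioc_subset.mp hev
    have hδ0 : (0:ℝ) < δ := hδmem
    filter_upwards [Ioc_mem_nhdsGT hδ0] with t ht
    have ht0 : (0:ℝ) < t := ht.1
    -- pointwise bound on Ioc 0 t
    have hpt : ∀ u ∈ Ioc (0:ℝ) t, B * f u ≤ f (l * u) := by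
      intro u hu
      have hu' : u ∈ Ioc (0:ℝ) δ := ⟨hu.1, hu.2.trans ht.2⟩
      exact (le_div_iff₀ (hpos u hu.1)).mp (hδ hu')
    -- integrability of u ↦ f (l * u) on Ioc 0 t
    have hig : IntegrableOn (fun u => f (l * u)) (Ioc 0 t) := by
      have h1 : IntervalIntegrable f volume 0 (l * t) :=
        (intervalIntegrable_iff_integrableOn_Ioc_of_le (by positivity)).mpr
          (hint (l * t) (by positivity))
      have h2 := h1.comp_mul_left (c := l)
      rw [zero_div, mul_div_cancel_left₀ _ hl0.ne'] at h2
      exact (intervalIntegrable_iff_integrableOn_Ioc_of_le ht0.le).mp h2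
    have hmono : B * F t ≤ ∫ u in Ioc (0:ℝ) t, f (l * u) := by
      rw [hF t ht0, ← MeasureTheory.integral_const_mul]
      exact setIntegral_mono_on ((hint t ht0).const_mul B) hig measurableSet_Ioc hpt
    have key : l * (B * F t) ≤ F (l * t) := by
      have := hscale l hl0 t ht0
      calc l * (B * F t) ≤ l * ∫ u in Ioc (0:ℝ) t, f (l * u) := by
            exact mul_le_mul_of_nonneg_left hmono hl0.le
        _ = F (l * t) := by rw [this]; field_simp
    have hFt := hFpos t ht0
    rw [le_div_iff₀ hFt]
    calc b * F t ≤ B * F t := mul_le_mul_of_nonneg_right (le_max_left _ _) hFt.le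
      _ ≤ l * (B * F t) := le_mul_of_one_le_left (by positivity) hl.le
      _ ≤ F (l * t) := key
  constructor
  · intro l hl
    have hl0 : (0:ℝ) < l := hl.1
    have hm : 1 < l⁻¹ := (one_lt_inv₀ hl0).mpr hl.2
    -- t ↦ l * t tends to 0⁺
    have hmap : Tendsto (fun t : ℝ => l * t) (𝓝[>] (0:ℝ)) (𝓝[>] (0:ℝ)) := by
      rw [tendsto_nhdsWithin_iff]
      constructor
      · have : Tendsto (fun t : ℝ => l * t) (𝓝[>] (0:ℝ)) (𝓝 (l * 0)) :=
          (tendsto_id.const_mul l).mono_left nhdsWithin_le_nhds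
        simpa using this
      · filter_upwards [self_mem_nhdsWithin] with t ht
        exact mul_pos hl0 ht
    have h3 := (main l⁻¹ hm).comp hmap
    have h4 := h3.inv_tendsto_atTop
    refine h4.congr' ?_
    filter_upwards [self_mem_nhdsWithin] with t ht
    have h5 : l⁻¹ * (l * t) = t := by field_simp
    show (F (l⁻¹ * (l * t)) / F (l * t))⁻¹ = F (l * t) / F t
    rw [h5, inv_div]
  · exact main
end
end

section
/- Let f : (0,∞) → (0,∞) be measurable, locally integrable on [0,∞), with f(t) > 0 a.e., and assume f is monotone increasing on (0,t₀] for some t₀ > 0. Define F(t) = ∫₀ᵗ f(s) ds. If F is rapidly varying at 0 (index ∞), then f is rapidly varying at 0 (index ∞). -/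
open MeasureTheory Filter Set Topology Real

noncomputable section

/-! Fix `0 < l < m < 1`. For small `t`, monotonicity of `f` on `[lt, t]` gives
`f(lt) (m - l) t ≤ F(mt)` and `F(t) - F(mt) ≤ f(t) (1 - m) t`, hence
`f(lt) / f(t) ≤ (1 - m) / (m - l) · r / (1 - r)` with `r = F(mt) / F(t) → 0`.
For `λ > 1`, `f(λt) / f(t)` is the reciprocal of `f(λ⁻¹ s) / f(s)` at `s = λt`,
so it tends to `∞`. -/

lemma tendsto_mul_left_nhdsGT_zero {c : ℝ} (hc : 0 < c) :
    Tendsto (c * ·) (𝓝[>] (0:ℝ)) (𝓝[>] 0) :=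
  tendsto_iff_comap.2 (comap_mulLeft_nhdsGT_zero hc).ge

theorem RapidVaryAt0.of_tendsto_zero {f : ℝ → ℝ} (hpos : ∀ᶠ t in 𝓝[>] (0:ℝ), 0 < f t)
    (h : ∀ l ∈ Ioo (0:ℝ) 1, Tendsto (fun t => f (l * t) / f t) (𝓝[>] 0) (𝓝 0)) :
    RapidVaryAt0 f := by
  refine ⟨h, fun l hl => ?_⟩
  have hl0 : 0 < l := one_pos.trans hl
  have hscale := tendsto_mul_left_nhdsGT_zero hl0
  have hinv : Tendsto (fun t => f (l⁻¹ * (l * t)) / f (l * t)) (𝓝[>] 0) (𝓝[>] 0) := by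
    refine tendsto_nhdsWithin_iff.2
      ⟨(h l⁻¹ ⟨inv_pos.2 hl0, inv_lt_one_of_one_lt₀ hl⟩).comp hscale, ?_⟩
    filter_upwards [hpos, hscale.eventually hpos] with t ht hlt
    exact div_pos (by rwa [inv_mul_cancel_left₀ hl0.ne']) hlt
  refine hinv.inv_tendsto_nhdsGT_zero.congr fun t => ?_
  simp only [Pi.inv_apply, inv_div, inv_mul_cancel_left₀ hl0.ne']

lemma MonotoneOn.mul_sub_le_intervalIntegral {f : ℝ → ℝ} {a b : ℝ} (hab : a ≤ b)
    (hf : MonotoneOn f (Icc a b)) : f a * (b - a) ≤ ∫ x in a..b, f x := by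
  have hint : IntervalIntegrable f volume a b := (uIcc_of_le hab ▸ hf).intervalIntegrable
  calc f a * (b - a) = ∫ _ in a..b, f a := by simp [mul_comm]
    _ ≤ ∫ x in a..b, f x := intervalIntegral.integral_mono_on hab intervalIntegrable_const hint
          fun x hx => hf (left_mem_Icc.2 hab) hx hx.1

lemma MonotoneOn.intervalIntegral_le_mul_sub {f : ℝ → ℝ} {a b : ℝ} (hab : a ≤ b)
    (hf : MonotoneOn f (Icc a b)) : ∫ x in a..b, f x ≤ f b * (b - a) := by
  have hint : IntervalIntegrable f volume a b := (uIcc_of_le hab ▸ hf).intervalIntegrable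
  calc ∫ x in a..b, f x ≤ ∫ _ in a..b, f b :=
        intervalIntegral.integral_mono_on hab hint intervalIntegrable_const
          fun x hx => hf hx (right_mem_Icc.2 hab) hx.2
    _ = f b * (b - a) := by simp [mul_comm]

section IntegralOfMonotone

variable {f F : ℝ → ℝ} {t₀ : ℝ}

lemma div_le_of_monotoneOn_Ioc (hpos : ∀ t > 0, 0 < f t) (hmono : MonotoneOn f (Ioc 0 t₀))
    (hF : ∀ a b, 0 < a → a ≤ b → F b - F a = ∫ x in a..b, f x)
    (hF0 : ∀ t > 0, 0 ≤ F t)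
    {l m t : ℝ} (hl : 0 < l) (hlm : l < m) (hm : m < 1) (ht : 0 < t) (ht₀ : t ≤ t₀) :
    f (l * t) / f t ≤ (1 - m) / (m - l) * (F (m * t) / (F t - F (m * t))) := by
  have hmono' : ∀ {a b}, 0 < a → b ≤ t₀ → MonotoneOn f (Icc a b) := fun ha hb =>
    hmono.mono fun x hx => ⟨ha.trans_le hx.1, hx.2.trans hb⟩
  have hm0 : 0 < m := hl.trans hlm
  have hlt : l * t ≤ m * t := by gcongr
  have hmt' : m * t < t := mul_lt_of_lt_one_left ht hm
  have hmt := hmt'.le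
  have hlow : f (l * t) * ((m - l) * t) ≤ F (m * t) := by
    have := (hmono' (by positivity) (hmt.trans ht₀)).mul_sub_le_intervalIntegral hlt
    rw [← hF _ _ (by positivity) hlt] at this
    linarith [hF0 (l * t) (by positivity)]
  have hup : F t - F (m * t) ≤ f t * ((1 - m) * t) := by
    have := (hmono' (by positivity) ht₀).intervalIntegral_le_mul_sub hmt
    rw [← hF _ _ (by positivity) hmt] at this
    linarith
  have hgap : 0 < F t - F (m * t) := by
    have := (hmono' (by positivity) ht₀).mul_sub_le_intervalIntegral hmt
    rw [← hF _ _ (by positivity) hmt] at this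
    exact (mul_pos (hpos _ (by positivity)) (sub_pos.2 hmt')).trans_le this
  have hml : 0 < (m - l) * t := mul_pos (by linarith) ht
  have h1m : 0 < (1 - m) * t := mul_pos (by linarith) ht
  calc f (l * t) / f t ≤ (F (m * t) / ((m - l) * t)) / ((F t - F (m * t)) / ((1 - m) * t)) := by
        gcongr
        · exact div_nonneg (hF0 _ (by positivity)) hml.le
        · exact (le_div_iff₀ hml).2 hlow
        · exact (div_le_iff₀ h1m).2 hup
    _ = (1 - m) / (m - l) * (F (m * t) / (F t - F (m * t))) := by
        field_simp

lemma tendsto_div_nhds_zero_of_monotoneOn_Ioc (hpos : ∀ t > 0, 0 < f t) (ht₀ : 0 < t₀)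
    (hmono : MonotoneOn f (Ioc 0 t₀))
    (hF : ∀ a b, 0 < a → a ≤ b → F b - F a = ∫ x in a..b, f x)
    (hFpos : ∀ t > 0, 0 < F t)
    (hrvF : ∀ m ∈ Ioo (0:ℝ) 1, Tendsto (fun t => F (m * t) / F t) (𝓝[>] 0) (𝓝 0))
    {l : ℝ} (hl : l ∈ Ioo (0:ℝ) 1) :
    Tendsto (fun t => f (l * t) / f t) (𝓝[>] 0) (𝓝 0) := by
  obtain ⟨hl0, hl1⟩ := hl
  obtain ⟨m, hlm, hm1⟩ := exists_between hl1
  have hr := hrvF m ⟨hl0.trans hlm, hm1⟩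
  have hbound : Tendsto (fun t => (1 - m) / (m - l) * (F (m * t) / (F t - F (m * t))))
      (𝓝[>] 0) (𝓝 0) := by
    have h := (hr.div (tendsto_const_nhds.sub hr) (by norm_num : (1:ℝ) - 0 ≠ 0)).const_mul
      ((1 - m) / (m - l))
    rw [zero_div, mul_zero] at h
    refine h.congr' (eventually_nhdsWithin_of_forall fun t (ht : 0 < t) => ?_)
    have := (hFpos t ht).ne'
    simp only [Pi.div_apply]
    field_simp
  refine squeeze_zero' ?_ ?_ hbound
  · filter_upwards [self_mem_nhdsWithin] with t (ht : 0 < t)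
    exact div_nonneg (hpos _ (by positivity)).le (hpos t ht).le
  · filter_upwards [Ioc_mem_nhdsGT ht₀] with t ht
    exact div_le_of_monotoneOn_Ioc hpos hmono hF (fun t ht => (hFpos t ht).le)
      hl0 hlm hm1 ht.1 ht.2

end IntegralOfMonotone

theorem stmt3_general (f : ℝ → ℝ)
    (hpos : ∀ t > (0:ℝ), 0 < f t)
    (hint : ∀ x > (0:ℝ), IntegrableOn f (Ioc 0 x))
    (t₀ : ℝ) (ht₀ : 0 < t₀) (hmono : MonotoneOn f (Ioc 0 t₀))
    (F : ℝ → ℝ) (hF : ∀ t > (0:ℝ), F t = ∫ s in Ioc (0:ℝ) t, f s)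
    (hrvF : RapidVaryAt0 F) :
    RapidVaryAt0 f := by
  have hf : ∀ t > 0, IntervalIntegrable f volume 0 t := fun t ht =>
    (intervalIntegrable_iff_integrableOn_Ioc_of_le ht.le).2 (hint t ht)
  have hF' : ∀ t > 0, F t = ∫ x in 0..t, f x := fun t ht => by
    rw [hF t ht, intervalIntegral.integral_of_le ht.le]
  have hFpos : ∀ t > 0, 0 < F t := fun t ht => by
    rw [hF' t ht]
    exact intervalIntegral.intervalIntegral_pos_of_pos_on (hf t ht) (fun x hx => hpos x hx.1) ht
  have hFsub : ∀ a b, 0 < a → a ≤ b → F b - F a = ∫ x in a..b, f x := fun a b ha hab => by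
    rw [hF' a ha, hF' b (ha.trans_le hab),
      intervalIntegral.integral_interval_sub_left (hf b (ha.trans_le hab)) (hf a ha)]
  exact .of_tendsto_zero (eventually_nhdsWithin_of_forall hpos) fun l hl =>
    tendsto_div_nhds_zero_of_monotoneOn_Ioc hpos ht₀ hmono hFsub hFpos hrvF.1 hl

theorem stmt3 (f : ℝ → ℝ)
    (hmeas : Measurable f)
    (hpos : ∀ t > (0:ℝ), 0 < f t)
    (hint : ∀ x > (0:ℝ), IntegrableOn f (Ioc 0 x))
    (t₀ : ℝ) (ht₀ : 0 < t₀) (hmono : MonotoneOn f (Ioc 0 t₀))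
    (F : ℝ → ℝ) (hF : ∀ t > (0:ℝ), F t = ∫ s in Ioc (0:ℝ) t, f s)
    (hrvF : RapidVaryAt0 F) :
    RapidVaryAt0 f :=
  stmt3_general f hpos hint t₀ ht₀ hmono F hF hrvF
end
end

section
/- Let H_n (n ∈ ℕ) and H be Hamiltonians on (0,∞), and set 𝔱_n(x) = ∫₀ˣ tr H_n(s) ds and 𝔱(x) = ∫₀ˣ tr H(s) ds, which are continuous strictly increasing bijections from [0,∞) onto [0,∞). Then the following are equivalent: (a) ∫₀ˣ H_n(t) dt → ∫₀ˣ H(t) dt as n → ∞, locally uniformly for x ∈ [0,∞); (b) for every x ≥ 0, ∫₀^{𝔱_n^{-1}(x)} H_n(t) dt → ∫₀^{𝔱^{-1}(x)} H(t) dt as n → ∞, and 𝔱_n(x) → 𝔱(x) locally uniformly for x ∈ [0,∞). -/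
open MeasureTheory Filter Set Topology

noncomputable section

/-- A Hamiltonian on `(0,∞)`: a measurable, locally integrable, a.e. symmetric positive
semidefinite `2×2`-matrix-valued function with a.e. positive trace, whose trace is not
integrable at `∞` (i.e. `∫₀^∞ tr H = ∞`). -/
def IsHamiltonian (H : ℝ → Matrix (Fin 2) (Fin 2) ℝ) : Prop :=
  (∀ i j : Fin 2, Measurable fun t => H t i j) ∧
  (∀ x > (0:ℝ), ∀ i j : Fin 2, IntegrableOn (fun t => H t i j) (Ioc 0 x)) ∧
  (∀ᵐ t : ℝ, 0 < t → (H t).PosSemidef ∧ 0 < (H t).trace) ∧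
  ¬ IntegrableOn (fun t => (H t).trace) (Ioi 0)

private lemma psd_abs_entry_le_trace {M : Matrix (Fin 2) (Fin 2) ℝ}
    (hM : M.PosSemidef) (i j : Fin 2) : |M i j| ≤ M.trace := by
  have h00 := hM.dotProduct_mulVec_nonneg ![1, 0]
  have h11 := hM.dotProduct_mulVec_nonneg ![0, 1]
  have hpp := hM.dotProduct_mulVec_nonneg ![1, 1]
  have hpm := hM.dotProduct_mulVec_nonneg ![1, -1]
  have hsym : M 1 0 = M 0 1 := by
    simpa using hM.1.apply 0 1
  simp [dotProduct, Matrix.mulVec, Fin.sum_univ_two] at h00 h11 hpp hpm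
  rw [Matrix.trace_fin_two]
  fin_cases i <;> fin_cases j <;> simp only [Fin.zero_eta, Fin.mk_one, Fin.isValue] <;>
    rw [abs_le] <;> constructor <;> nlinarith [h00, h11, hpp, hpm, hsym]

private lemma ham_int_entry {f : ℝ → Matrix (Fin 2) (Fin 2) ℝ} (hf : IsHamiltonian f)
    (x : ℝ) (i j : Fin 2) : IntegrableOn (fun t => f t i j) (Ioc 0 x) := by
  rcases le_or_gt x 0 with h | h
  · rw [Ioc_eq_empty (by simpa using h)]
    exact integrableOn_empty
  · exact hf.2.1 x h i j

private lemma ham_int_trace {f : ℝ → Matrix (Fin 2) (Fin 2) ℝ} (hf : IsHamiltonian f)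
    (x : ℝ) : IntegrableOn (fun t => (f t).trace) (Ioc 0 x) := by
  simp only [Matrix.trace_fin_two]
  exact (ham_int_entry hf x 0 0).add (ham_int_entry hf x 1 1)

private lemma integral_Ioc_split {g : ℝ → ℝ} (hg : ∀ x, IntegrableOn g (Ioc (0:ℝ) x))
    {a b : ℝ} (h0 : 0 ≤ a) (hab : a ≤ b) :
    (∫ s in Ioc (0:ℝ) b, g s) = (∫ s in Ioc (0:ℝ) a, g s) + ∫ s in Ioc a b, g s := by
  rw [← Ioc_union_Ioc_eq_Ioc h0 hab,
    setIntegral_union (Ioc_disjoint_Ioc_of_le le_rfl) measurableSet_Ioc (hg a)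
      ((hg b).mono_set (Ioc_subset_Ioc_left h0))]

private lemma ham_ae_bound {f : ℝ → Matrix (Fin 2) (Fin 2) ℝ} (hf : IsHamiltonian f)
    {a b : ℝ} (h0 : 0 ≤ a) (i j : Fin 2) :
    ∀ᵐ t ∂(volume.restrict (Ioc a b)), |f t i j| ≤ (f t).trace := by
  refine (ae_restrict_iff' measurableSet_Ioc).2 ?_
  filter_upwards [hf.2.2.1] with t ht hmem
  exact psd_abs_entry_le_trace (ht (lt_of_le_of_lt h0 hmem.1)).1 i j

private lemma ham_ae_trace_nonneg {f : ℝ → Matrix (Fin 2) (Fin 2) ℝ} (hf : IsHamiltonian f)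
    {a b : ℝ} (h0 : 0 ≤ a) :
    ∀ᵐ t ∂(volume.restrict (Ioc a b)), 0 ≤ (f t).trace := by
  refine (ae_restrict_iff' measurableSet_Ioc).2 ?_
  filter_upwards [hf.2.2.1] with t ht hmem
  exact (ht (lt_of_le_of_lt h0 hmem.1)).2.le

private lemma ham_trace_nonneg_int {f : ℝ → Matrix (Fin 2) (Fin 2) ℝ} (hf : IsHamiltonian f)
    {a b : ℝ} (h0 : 0 ≤ a) : 0 ≤ ∫ s in Ioc a b, (f s).trace :=
  integral_nonneg_of_ae (ham_ae_trace_nonneg hf h0)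

private lemma ham_abs_le {f : ℝ → Matrix (Fin 2) (Fin 2) ℝ} (hf : IsHamiltonian f)
    {a b : ℝ} (h0 : 0 ≤ a) (i j : Fin 2) :
    |∫ s in Ioc a b, f s i j| ≤ ∫ s in Ioc a b, (f s).trace := by
  calc |∫ s in Ioc a b, f s i j| ≤ ∫ s in Ioc a b, |f s i j| := by
        simpa [Real.norm_eq_abs] using
          norm_integral_le_integral_norm (μ := volume.restrict (Ioc a b)) (fun s => f s i j)
    _ ≤ ∫ s in Ioc a b, (f s).trace :=
        integral_mono_ae ((ham_int_entry hf b i j).mono_set (Ioc_subset_Ioc_left h0)).abs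
          ((ham_int_trace hf b).mono_set (Ioc_subset_Ioc_left h0)) (ham_ae_bound hf h0 i j)

private lemma ham_entry_lip {f : ℝ → Matrix (Fin 2) (Fin 2) ℝ} (hf : IsHamiltonian f)
    {a b : ℝ} (h0a : 0 ≤ a) (h0b : 0 ≤ b) (i j : Fin 2) :
    |(∫ s in Ioc (0:ℝ) b, f s i j) - ∫ s in Ioc (0:ℝ) a, f s i j| ≤
      |(∫ s in Ioc (0:ℝ) b, (f s).trace) - ∫ s in Ioc (0:ℝ) a, (f s).trace| := by
  rcases le_total a b with hab | hab
  · rw [integral_Ioc_split (fun x => ham_int_entry hf x i j) h0a hab,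
      integral_Ioc_split (fun x => ham_int_trace hf x) h0a hab]
    simp only [add_sub_cancel_left]
    rw [abs_of_nonneg (ham_trace_nonneg_int hf h0a)]
    exact ham_abs_le hf h0a i j
  · rw [abs_sub_comm, abs_sub_comm (∫ s in Ioc (0:ℝ) b, (f s).trace)]
    rw [integral_Ioc_split (fun x => ham_int_entry hf x i j) h0b hab,
      integral_Ioc_split (fun x => ham_int_trace hf x) h0b hab]
    simp only [add_sub_cancel_left]
    rw [abs_of_nonneg (ham_trace_nonneg_int hf h0b)]
    exact ham_abs_le hf h0b i j

private lemma ham_T_mono {f : ℝ → Matrix (Fin 2) (Fin 2) ℝ} (hf : IsHamiltonian f)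
    {a b : ℝ} (h0 : 0 ≤ a) (hab : a ≤ b) :
    (∫ s in Ioc (0:ℝ) a, (f s).trace) ≤ ∫ s in Ioc (0:ℝ) b, (f s).trace := by
  rw [integral_Ioc_split (fun x => ham_int_trace hf x) h0 hab]
  linarith [ham_trace_nonneg_int hf h0 (b := b)]

private lemma ham_T_strict {f : ℝ → Matrix (Fin 2) (Fin 2) ℝ} (hf : IsHamiltonian f)
    {a b : ℝ} (h0 : 0 ≤ a) (hab : a < b) :
    (∫ s in Ioc (0:ℝ) a, (f s).trace) < ∫ s in Ioc (0:ℝ) b, (f s).trace := by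
  rw [integral_Ioc_split (fun x => ham_int_trace hf x) h0 hab.le]
  have hpos : 0 < ∫ s in Ioc a b, (f s).trace := by
    rcases (ham_trace_nonneg_int hf h0 (b := b)).lt_or_eq with h | h
    · exact h
    · exfalso
      have hint := (ham_int_trace hf b).mono_set (Ioc_subset_Ioc_left h0)
      have hz := (integral_eq_zero_iff_of_nonneg_ae (ham_ae_trace_nonneg hf h0) hint).1 h.symm
      have hp : ∀ᵐ t ∂(volume.restrict (Ioc a b)), 0 < (f t).trace := by
        refine (ae_restrict_iff' measurableSet_Ioc).2 ?_
        filter_upwards [hf.2.2.1] with t ht hmem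
        exact (ht (lt_of_le_of_lt h0 hmem.1)).2
      have hFalse : ∀ᵐ t ∂(volume.restrict (Ioc a b)), False := by
        filter_upwards [hz, hp] with t h1 h2
        rw [Pi.zero_apply] at h1
        linarith
      have hμ : volume (Ioc a b) = 0 := by
        have h' := ae_iff.1 hFalse
        simpa [Measure.restrict_apply_univ] using h'
      rw [Real.volume_Ioc] at hμ
      rw [ENNReal.ofReal_eq_zero] at hμ
      linarith
  linarith

private lemma tendstoUniformlyOn_of_lip (g : ℕ → ℝ → ℝ) (gl : ℝ → ℝ) (M : ℝ)
    (hg : ∀ n, ∀ x ∈ Icc (0:ℝ) M, ∀ y ∈ Icc (0:ℝ) M, |g n x - g n y| ≤ |x - y|)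
    (hgl : ∀ x ∈ Icc (0:ℝ) M, ∀ y ∈ Icc (0:ℝ) M, |gl x - gl y| ≤ |x - y|)
    (hpt : ∀ x ∈ Icc (0:ℝ) M, Tendsto (fun n => g n x) atTop (𝓝 (gl x))) :
    TendstoUniformlyOn g gl atTop (Icc 0 M) := by
  rcases lt_or_ge M 0 with hM | hM
  · rw [Icc_eq_empty (by linarith)]
    exact tendstoUniformlyOn_empty
  rw [Metric.tendstoUniformlyOn_iff]
  intro ε hε
  set c := ε / 4 with hc
  have hcpos : 0 < c := by positivity
  set K := ⌈M / c⌉₊ with hK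
  have hnet : ∀ᶠ n in atTop, ∀ k ∈ Finset.range (K + 1),
      dist (g n (min (k * c) M)) (gl (min (k * c) M)) < c := by
    rw [Filter.eventually_all_finset]
    intro k _
    have hmem : min ((k:ℝ) * c) M ∈ Icc (0:ℝ) M :=
      ⟨le_min (by positivity) hM, min_le_right _ _⟩
    exact Metric.tendsto_nhds.1 (hpt _ hmem) c hcpos
  filter_upwards [hnet] with n hn x hx
  obtain ⟨hx0, hxM⟩ := hx
  set k := ⌊x / c⌋₊ with hkdef
  have hkK : k ≤ K := le_trans (Nat.floor_le_floor (by gcongr)) (Nat.floor_le_ceil _)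
  have hkc_le : (k:ℝ) * c ≤ x := by
    have h1 : (k:ℝ) ≤ x / c := Nat.floor_le (by positivity)
    calc (k:ℝ) * c ≤ (x / c) * c := by nlinarith
      _ = x := div_mul_cancel₀ x hcpos.ne'
  have hx_lt : x - (k:ℝ) * c < c := by
    have h1 : x / c < (k:ℝ) + 1 := Nat.lt_floor_add_one (x / c)
    have h2 : x < ((k:ℝ) + 1) * c := by
      rw [← div_lt_iff₀ hcpos] at *
      linarith
    linarith
  have hkcM : (k:ℝ) * c ∈ Icc (0:ℝ) M := ⟨by positivity, le_trans hkc_le hxM⟩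
  have hmin : min ((k:ℝ) * c) M = (k:ℝ) * c := min_eq_left (le_trans hkc_le hxM)
  have h1 := hn k (Finset.mem_range.2 (Nat.lt_succ_of_le hkK))
  rw [hmin, Real.dist_eq] at h1
  have h3 := hgl x ⟨hx0, hxM⟩ _ hkcM
  rw [Real.dist_eq]
  have habs : |x - (k:ℝ) * c| < c := by
    rw [abs_of_nonneg (by linarith)]; exact hx_lt
  have t1 : |gl x - g n x| ≤ |gl x - gl ((k:ℝ) * c)| + |gl ((k:ℝ) * c) - g n x| :=
    abs_sub_le _ _ _
  have t2 : |gl ((k:ℝ) * c) - g n x| ≤ |gl ((k:ℝ) * c) - g n ((k:ℝ) * c)| +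
      |g n ((k:ℝ) * c) - g n x| := abs_sub_le _ _ _
  have h1' : |gl ((k:ℝ) * c) - g n ((k:ℝ) * c)| < c := by rwa [abs_sub_comm] at h1
  have h2 := hg n x ⟨hx0, hxM⟩ _ hkcM
  have h2' : |g n ((k:ℝ) * c) - g n x| ≤ |x - (k:ℝ) * c| := by
    rw [abs_sub_comm]; exact h2
  have hfin : |gl x - g n x| < c + c + c := by linarith
  rw [hc] at hfin
  linarith

theorem stmt5 (H : ℕ → ℝ → Matrix (Fin 2) (Fin 2) ℝ)
    (Hlim : ℝ → Matrix (Fin 2) (Fin 2) ℝ)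
    (hH : ∀ n, IsHamiltonian (H n)) (hHlim : IsHamiltonian Hlim)
    -- `τ n` is the inverse of `𝔱_n : x ↦ ∫₀ˣ tr Hₙ`, and `τlim` the inverse of
    -- `𝔱 : x ↦ ∫₀ˣ tr H` (both are continuous strictly increasing bijections of `[0,∞)`).
    (τ : ℕ → ℝ → ℝ) (τlim : ℝ → ℝ)
    (hτ : ∀ n, ∀ x ≥ (0:ℝ), 0 ≤ τ n x ∧ (∫ s in Ioc (0:ℝ) (τ n x), (H n s).trace) = x)
    (hτlim : ∀ x ≥ (0:ℝ), 0 ≤ τlim x ∧ (∫ s in Ioc (0:ℝ) (τlim x), (Hlim s).trace) = x) :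
    (∀ T > (0:ℝ), ∀ i j : Fin 2,
        TendstoUniformlyOn (fun n x => ∫ s in Ioc (0:ℝ) x, H n s i j)
          (fun x => ∫ s in Ioc (0:ℝ) x, Hlim s i j) atTop (Icc 0 T)) ↔
      ((∀ x ≥ (0:ℝ), ∀ i j : Fin 2,
          Tendsto (fun n => ∫ s in Ioc (0:ℝ) (τ n x), H n s i j) atTop
            (𝓝 (∫ s in Ioc (0:ℝ) (τlim x), Hlim s i j))) ∧
        (∀ T > (0:ℝ),
          TendstoUniformlyOn (fun n x => ∫ s in Ioc (0:ℝ) x, (H n s).trace)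
            (fun x => ∫ s in Ioc (0:ℝ) x, (Hlim s).trace) atTop (Icc 0 T))) := by
  -- auxiliary facts
  have T0 : ∀ (f : ℝ → Matrix (Fin 2) (Fin 2) ℝ), (∫ s in Ioc (0:ℝ) 0, (f s).trace) = 0 := by
    intro f; simp
  have Tnonneg : ∀ (f : ℝ → Matrix (Fin 2) (Fin 2) ℝ), IsHamiltonian f → ∀ x : ℝ, 0 ≤ x →
      0 ≤ ∫ s in Ioc (0:ℝ) x, (f s).trace := by
    intro f hf x hx
    have := ham_T_mono hf le_rfl hx
    rwa [T0] at this
  have inj : ∀ (f : ℝ → Matrix (Fin 2) (Fin 2) ℝ), IsHamiltonian f → ∀ u v : ℝ,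
      0 ≤ u → 0 ≤ v →
      (∫ s in Ioc (0:ℝ) u, (f s).trace) = (∫ s in Ioc (0:ℝ) v, (f s).trace) → u = v := by
    intro f hf u v hu hv h
    rcases lt_trichotomy u v with hlt | he | hlt
    · exact absurd h (ne_of_lt (ham_T_strict hf hu hlt))
    · exact he
    · exact absurd h.symm (ne_of_lt (ham_T_strict hf hv hlt))
  have τleft : ∀ n (y : ℝ), 0 ≤ y → τ n (∫ s in Ioc (0:ℝ) y, (H n s).trace) = y := by
    intro n y hy
    obtain ⟨h1, h2⟩ := hτ n _ (Tnonneg _ (hH n) y hy)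
    exact inj _ (hH n) _ y h1 hy h2
  have τlimleft : ∀ y : ℝ, 0 ≤ y → τlim (∫ s in Ioc (0:ℝ) y, (Hlim s).trace) = y := by
    intro y hy
    obtain ⟨h1, h2⟩ := hτlim _ (Tnonneg _ hHlim y hy)
    exact inj _ hHlim _ y h1 hy h2
  constructor
  · -- (a) → (b)
    intro ha
    have htr : ∀ T > (0:ℝ),
        TendstoUniformlyOn (fun n x => ∫ s in Ioc (0:ℝ) x, (H n s).trace)
          (fun x => ∫ s in Ioc (0:ℝ) x, (Hlim s).trace) atTop (Icc 0 T) := by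
      intro T hT
      have etr : ∀ (f : ℝ → Matrix (Fin 2) (Fin 2) ℝ), IsHamiltonian f → ∀ x : ℝ,
          (∫ s in Ioc (0:ℝ) x, (f s).trace) =
            (∫ s in Ioc (0:ℝ) x, f s 0 0) + ∫ s in Ioc (0:ℝ) x, f s 1 1 := by
        intro f hf x
        rw [← integral_add (ham_int_entry hf x 0 0) (ham_int_entry hf x 1 1)]
        simp only [Matrix.trace_fin_two]
      have hconv := (ha T hT 0 0).add (ha T hT 1 1)
      have hfun1 : (fun n x => ∫ s in Ioc (0:ℝ) x, (H n s).trace) =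
          fun n x => (∫ s in Ioc (0:ℝ) x, H n s 0 0) + ∫ s in Ioc (0:ℝ) x, H n s 1 1 := by
        funext n x; exact etr _ (hH n) x
      have hfun2 : (fun x => ∫ s in Ioc (0:ℝ) x, (Hlim s).trace) =
          fun x => (∫ s in Ioc (0:ℝ) x, Hlim s 0 0) + ∫ s in Ioc (0:ℝ) x, Hlim s 1 1 := by
        funext x; exact etr _ hHlim x
      rw [hfun1, hfun2]
      exact hconv
    refine ⟨?_, htr⟩
    intro x hx i j
    obtain ⟨ht0, htx⟩ := hτlim x hx
    have hMpos : (0:ℝ) < τlim x + 1 := by linarith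
    have hδpos : x < ∫ s in Ioc (0:ℝ) (τlim x + 1), (Hlim s).trace := by
      have := ham_T_strict hHlim ht0 (show τlim x < τlim x + 1 by linarith)
      rwa [htx] at this
    set TlM := ∫ s in Ioc (0:ℝ) (τlim x + 1), (Hlim s).trace with hTlM
    set δ := TlM - x with hδdef
    rw [Metric.tendsto_nhds]
    intro ε hε
    have hent := Metric.tendstoUniformlyOn_iff.1 (ha _ hMpos i j) (ε/3) (by linarith)
    have htrm := Metric.tendstoUniformlyOn_iff.1 (htr _ hMpos) (min (ε/3) δ)
      (lt_min (by linarith) (by rw [hδdef]; linarith))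
    filter_upwards [hent, htrm] with n hn htn
    obtain ⟨hτn0, hτnx⟩ := hτ n x hx
    have hMIcc : τlim x + 1 ∈ Icc (0:ℝ) (τlim x + 1) := ⟨hMpos.le, le_refl _⟩
    have h1 := htn _ hMIcc
    rw [Real.dist_eq] at h1
    have h2 : x < ∫ s in Ioc (0:ℝ) (τlim x + 1), (H n s).trace := by
      have h1' := lt_of_lt_of_le h1 (min_le_right (ε/3) δ)
      have h1'' := abs_lt.1 h1'
      rw [hδdef] at h1''
      linarith [h1''.1]
    have hτnM : τ n x ≤ τlim x + 1 := by
      by_contra hcon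
      push_neg at hcon
      have := ham_T_mono (hH n) hMpos.le hcon.le
      rw [hτnx] at this
      linarith
    have hτmem : τ n x ∈ Icc (0:ℝ) (τlim x + 1) := ⟨hτn0, hτnM⟩
    have e1 := hn _ hτmem
    have e2 := htn _ hτmem
    rw [Real.dist_eq] at e1 e2
    rw [hτnx] at e2
    have e2' := lt_of_lt_of_le e2 (min_le_left (ε/3) δ)
    have e3 := ham_entry_lip hHlim (a := τlim x) (b := τ n x) ht0 hτn0 i j
    rw [htx] at e3
    rw [Real.dist_eq]
    have tri : |(∫ s in Ioc (0:ℝ) (τ n x), H n s i j) - ∫ s in Ioc (0:ℝ) (τlim x), Hlim s i j| ≤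
        |(∫ s in Ioc (0:ℝ) (τ n x), H n s i j) - ∫ s in Ioc (0:ℝ) (τ n x), Hlim s i j| +
        |(∫ s in Ioc (0:ℝ) (τ n x), Hlim s i j) - ∫ s in Ioc (0:ℝ) (τlim x), Hlim s i j| :=
      abs_sub_le _ _ _
    have e1' : |(∫ s in Ioc (0:ℝ) (τ n x), H n s i j) -
        ∫ s in Ioc (0:ℝ) (τ n x), Hlim s i j| < ε/3 := by
      rwa [abs_sub_comm] at e1
    linarith
  · -- (b) → (a)
    rintro ⟨hpt, htr⟩ T hT i j
    have hTl0 : 0 ≤ ∫ s in Ioc (0:ℝ) T, (Hlim s).trace := Tnonneg _ hHlim T hT.le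
    set M := (∫ s in Ioc (0:ℝ) T, (Hlim s).trace) + 1 with hMdef
    have hMpos : 0 < M := by rw [hMdef]; linarith
    have hBlip : ∀ n, ∀ u ∈ Icc (0:ℝ) M, ∀ v ∈ Icc (0:ℝ) M,
        |(∫ s in Ioc (0:ℝ) (τ n u), H n s i j) - ∫ s in Ioc (0:ℝ) (τ n v), H n s i j| ≤
          |u - v| := by
      intro n u hu v hv
      obtain ⟨hu0, hTu⟩ := hτ n u hu.1
      obtain ⟨hv0, hTv⟩ := hτ n v hv.1
      have := ham_entry_lip (hH n) (a := τ n v) (b := τ n u) hv0 hu0 i j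
      rwa [hTu, hTv] at this
    have hBliplim : ∀ u ∈ Icc (0:ℝ) M, ∀ v ∈ Icc (0:ℝ) M,
        |(∫ s in Ioc (0:ℝ) (τlim u), Hlim s i j) - ∫ s in Ioc (0:ℝ) (τlim v), Hlim s i j| ≤
          |u - v| := by
      intro u hu v hv
      obtain ⟨hu0, hTu⟩ := hτlim u hu.1
      obtain ⟨hv0, hTv⟩ := hτlim v hv.1
      have := ham_entry_lip hHlim (a := τlim v) (b := τlim u) hv0 hu0 i j
      rwa [hTu, hTv] at this
    have hBunif := tendstoUniformlyOn_of_lip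
      (fun n y => ∫ s in Ioc (0:ℝ) (τ n y), H n s i j)
      (fun y => ∫ s in Ioc (0:ℝ) (τlim y), Hlim s i j) M
      hBlip hBliplim (fun y hy => hpt y hy.1 i j)
    rw [Metric.tendstoUniformlyOn_iff]
    intro ε hε
    have hB := Metric.tendstoUniformlyOn_iff.1 hBunif (ε/2) (by linarith)
    have hT' := Metric.tendstoUniformlyOn_iff.1 (htr T hT) (min (ε/2) 1)
      (lt_min (by linarith) one_pos)
    filter_upwards [hB, hT'] with n hBn hTn x hx
    obtain ⟨hx0, hxT⟩ := hx
    have hTx0 : 0 ≤ ∫ s in Ioc (0:ℝ) x, (Hlim s).trace := Tnonneg _ hHlim x hx0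
    have hTxT : (∫ s in Ioc (0:ℝ) x, (Hlim s).trace) ≤ ∫ s in Ioc (0:ℝ) T, (Hlim s).trace :=
      ham_T_mono hHlim hx0 hxT
    have ht := hTn x ⟨hx0, hxT⟩
    rw [Real.dist_eq] at ht
    have hTn0 : 0 ≤ ∫ s in Ioc (0:ℝ) x, (H n s).trace := Tnonneg _ (hH n) x hx0
    have hTnM : (∫ s in Ioc (0:ℝ) x, (H n s).trace) ≤ M := by
      have h1 := abs_lt.1 (lt_of_lt_of_le ht (min_le_right (ε/2) 1))
      rw [hMdef]
      linarith [h1.1]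
    have hTlM : (∫ s in Ioc (0:ℝ) x, (Hlim s).trace) ≤ M := by rw [hMdef]; linarith
    have e1 := hBn _ ⟨hTn0, hTnM⟩
    simp only [Real.dist_eq] at e1
    have e2 : (∫ s in Ioc (0:ℝ) (τ n (∫ s in Ioc (0:ℝ) x, (H n s).trace)), H n s i j) =
        ∫ s in Ioc (0:ℝ) x, H n s i j := by
      rw [τleft n x hx0]
    have e4 : (∫ s in Ioc (0:ℝ) (τlim (∫ s in Ioc (0:ℝ) x, (Hlim s).trace)), Hlim s i j) =
        ∫ s in Ioc (0:ℝ) x, Hlim s i j := by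
      rw [τlimleft x hx0]
    have e3 := hBliplim _ ⟨hTx0, hTlM⟩ _ ⟨hTn0, hTnM⟩
    rw [Real.dist_eq]
    rw [← e4, ← e2]
    have tri := abs_sub_le
      (∫ s in Ioc (0:ℝ) (τlim (∫ s in Ioc (0:ℝ) x, (Hlim s).trace)), Hlim s i j)
      (∫ s in Ioc (0:ℝ) (τlim (∫ s in Ioc (0:ℝ) x, (H n s).trace)), Hlim s i j)
      (∫ s in Ioc (0:ℝ) (τ n (∫ s in Ioc (0:ℝ) x, (H n s).trace)), H n s i j)
    have hmin := min_le_left (ε/2) (1:ℝ)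
    linarith
end
end

section
/- Let z₀ ∈ ℂ⁺, r₀ > 0, and let q be a continuous function on the ray {s·z₀ : s ∈ (r₀,∞)} with values in ℂ∖{0}. Let f : (0,∞) → (0,∞) be measurable and let B ⊆ (r₀,∞) be a set of positive Lebesgue measure. Assume that for every z ∈ {s·z₀ : s ∈ B} the limit lim_{r→∞} q(rz)/f(r) exists and is non-zero. Then there exist α ∈ ℝ and ω ∈ ℂ∖{0} such that f is regularly varying at ∞ with index α and, for every z on the ray {s·z₀ : s ∈ (0,∞)}, lim_{r→∞} q(rz)/f(r) = i·ω·(z/i)^α. -/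
open MeasureTheory Filter Set Topology Real

noncomputable section

/-- `f : (0,∞) → (0,∞)` is regularly varying at `∞` with index `α`:
for every `λ > 0`, `f(λr)/f(r) → λ^α` as `r → ∞`. -/
def RegVaryAtTop (f : ℝ → ℝ) (α : ℝ) : Prop :=
  ∀ l : ℝ, 0 < l → Tendsto (fun r => f (l * r) / f r) atTop (𝓝 (l ^ α))

/-!
Write `u(x) = q(x z₀)`, so that `u(rs)/f(r) → L(s) ≠ 0` for `s ∈ B`. Dividing two of these limits
shows that `f(λr)/f(r)` has a positive limit for every `λ ∈ B/B`. In logarithmic coordinates the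
scales `λ` with this property form an additive subgroup of `ℝ`; by Steinhaus' theorem it contains a
neighbourhood of `0`, so it is all of `ℝ`. The limit function is then a measurable solution of
Cauchy's multiplicative equation, i.e. `λ ↦ λ^α`. Finally, for a fixed `t ∈ B`,
`u(rs)/f(r) = u(rs)/f(rs/t) · f(rs/t)/f(r) → L(t) (s/t)^α`, which is the claimed formula with
`ω = L(t) t^(-α) / (i (z₀/i)^α)`.
-/

open Pointwise

theorem AddSubgroup.eq_top_of_mem_nhds_zero {G : Type*} [AddGroup G] [TopologicalSpace G]
    [IsTopologicalAddGroup G] [ConnectedSpace G] (H : AddSubgroup G) (hH : (H : Set G) ∈ 𝓝 0) :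
    H = ⊤ := by
  have hopen := H.isOpen_of_mem_nhds hH
  rw [← AddSubgroup.coe_eq_univ]
  exact IsClopen.eq_univ ⟨H.isClosed_of_isOpen hopen, hopen⟩ ⟨0, H.zero_mem⟩

theorem volume_preimage_exp_pos {B : Set ℝ} (hB : B ⊆ Ioi 0) (hBpos : 0 < volume B) :
    0 < volume (exp ⁻¹' B) := by
  refine pos_iff_ne_zero.2 fun h => hBpos.ne' ?_
  have himage : exp '' (exp ⁻¹' B) = B := by
    rw [image_preimage_eq_inter_range, range_exp, inter_eq_left.2 hB]
  rw [← himage]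
  exact addHaar_image_eq_zero_of_differentiableOn_of_addHaar_eq_zero volume
    differentiable_exp.differentiableOn h

theorem eq_exp_mul_of_measurable_of_map_add {φ : ℝ → ℝ} (hmeas : Measurable φ)
    (hpos : ∀ x, 0 < φ x) (hadd : ∀ x y, φ (x + y) = φ x * φ y) (x : ℝ) :
    φ x = exp (x * log (φ 1)) := by
  let g : ℝ →+ ℝ := AddMonoidHom.mk' (fun x => log (φ x)) fun x y => by
    simp only [hadd, log_mul (hpos x).ne' (hpos y).ne']
  have hg : Continuous g := Measure.AddMonoidHom.continuous_of_measurable g hmeas.log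
  have hlin : log (φ x) = x * log (φ 1) := by simpa [g] using map_real_smul g hg x 1
  rw [← hlin, exp_log (hpos x)]

theorem tendsto_ratio_of_tendsto_div {𝕜 : Type*} [NormedField 𝕜] {u f : ℝ → 𝕜} {s t : ℝ}
    {a b : 𝕜} (hst : 0 < s / t) (hs : Tendsto (fun r => u (r * s) / f r) atTop (𝓝 a))
    (ht : Tendsto (fun r => u (r * t) / f r) atTop (𝓝 b)) (hb : b ≠ 0) :
    Tendsto (fun r => f (s / t * r) / f r) atTop (𝓝 (a / b)) := by
  have ht₀ : t ≠ 0 := by rintro rfl; simp at hst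
  have ht' := ht.comp (show Tendsto (fun r => s / t * r) atTop atTop from
    tendsto_id.const_mul_atTop hst)
  refine (hs.div ht' hb).congr' ?_
  filter_upwards [ht'.eventually_ne hb] with r hr
  have harg : s / t * r * t = r * s := by field_simp
  simp only [Pi.div_apply, Function.comp_apply, harg] at hr ⊢
  exact div_div_div_cancel_left' _ _ (div_ne_zero_iff.1 hr).1

theorem Complex.ofReal_mul_cpow {s : ℝ} (hs : 0 < s) {w : ℂ} (hw : w ≠ 0) (a : ℂ) :
    ((s : ℂ) * w) ^ a = (s : ℂ) ^ a * w ^ a := by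
  have hs' : (s : ℂ) ≠ 0 := ofReal_ne_zero.2 hs.ne'
  rw [cpow_def_of_ne_zero (mul_ne_zero hs' hw), cpow_def_of_ne_zero hs', cpow_def_of_ne_zero hw,
    log_ofReal_mul hs hw, ofReal_log hs.le, add_mul, exp_add]

def HasRatioLimit (f : ℝ → ℝ) (l c : ℝ) : Prop :=
  Tendsto (fun r => f (l * r) / f r) atTop (𝓝 c)

section RatioLimit

variable {f : ℝ → ℝ}

theorem hasRatioLimit_one (hf : ∀ᶠ r in atTop, f r ≠ 0) : HasRatioLimit f 1 1 :=
  tendsto_const_nhds.congr' (hf.mono fun r hr => by simp only [one_mul, div_self hr])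

theorem HasRatioLimit.mul {l m a b : ℝ} (hl : HasRatioLimit f l a) (hm : HasRatioLimit f m b)
    (hf : ∀ᶠ r in atTop, f r ≠ 0) (hm₀ : 0 < m) : HasRatioLimit f (l * m) (a * b) := by
  have hmr : Tendsto (fun r => m * r) atTop atTop := tendsto_id.const_mul_atTop hm₀
  refine ((hl.comp hmr).mul hm).congr' ?_
  filter_upwards [hmr.eventually hf] with r hr
  simp only [Function.comp_apply, mul_assoc]
  field_simp

theorem HasRatioLimit.inv {l a : ℝ} (h : HasRatioLimit f l a) (hl : 0 < l) (ha : a ≠ 0) :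
    HasRatioLimit f l⁻¹ a⁻¹ := by
  refine ((h.comp (tendsto_id.const_mul_atTop (inv_pos.2 hl))).inv₀ ha).congr fun r => ?_
  simp only [Function.comp_apply, id, mul_inv_cancel_left₀ hl.ne', inv_div]

theorem HasRatioLimit.unique {l a b : ℝ} (ha : HasRatioLimit f l a) (hb : HasRatioLimit f l b) :
    a = b :=
  tendsto_nhds_unique ha hb

variable (f) in
def ratioLimitSubgroup (hf : ∀ᶠ r in atTop, f r ≠ 0) : AddSubgroup ℝ where
  carrier := {x | ∃ c, 0 < c ∧ HasRatioLimit f (exp x) c}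
  zero_mem' := ⟨1, one_pos, by simpa using hasRatioLimit_one hf⟩
  add_mem' := by
    rintro x y ⟨a, ha, hx⟩ ⟨b, hb, hy⟩
    exact ⟨a * b, mul_pos ha hb, by rw [exp_add]; exact hx.mul hy hf (exp_pos y)⟩
  neg_mem' := by
    rintro x ⟨a, ha, hx⟩
    exact ⟨a⁻¹, inv_pos.2 ha, by rw [exp_neg]; exact hx.inv (exp_pos x) ha.ne'⟩

theorem mem_ratioLimitSubgroup {hf : ∀ᶠ r in atTop, f r ≠ 0} {x : ℝ} :
    x ∈ ratioLimitSubgroup f hf ↔ ∃ c, 0 < c ∧ HasRatioLimit f (exp x) c :=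
  Iff.rfl

theorem forall_hasRatioLimit_of_measure_pos (hf : ∀ᶠ r in atTop, f r ≠ 0)
    {B : Set ℝ} (hB : B ⊆ Ioi 0) (hBmeas : MeasurableSet B) (hBpos : 0 < volume B)
    (hBB : ∀ s ∈ B, ∀ t ∈ B, ∃ c, 0 < c ∧ HasRatioLimit f (s / t) c) :
    ∀ l, 0 < l → ∃ c, 0 < c ∧ HasRatioLimit f l c := by
  have hsteinhaus : exp ⁻¹' B - exp ⁻¹' B ∈ 𝓝 (0 : ℝ) :=
    Measure.sub_mem_nhds_zero_of_addHaar_pos volume _ (hBmeas.preimage measurable_exp)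
      (volume_preimage_exp_pos hB hBpos)
  have htop : ratioLimitSubgroup f hf = ⊤ := by
    refine AddSubgroup.eq_top_of_mem_nhds_zero _ (mem_of_superset hsteinhaus ?_)
    rintro _ ⟨a, ha, b, hb, rfl⟩
    simpa only [SetLike.mem_coe, mem_ratioLimitSubgroup, exp_sub] using hBB _ ha _ hb
  intro l hl
  have hlog : log l ∈ ratioLimitSubgroup f hf := htop ▸ AddSubgroup.mem_top _
  simpa only [mem_ratioLimitSubgroup, exp_log hl] using hlog

theorem measurable_of_hasRatioLimit_exp (hfmeas : Measurable f) {φ : ℝ → ℝ}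
    (hφ : ∀ x, HasRatioLimit f (exp x) (φ x)) : Measurable φ :=
  measurable_of_tendsto_metrizable (f := fun (n : ℕ) x => f (exp x * n) / f n)
    (fun _ => (hfmeas.comp (measurable_exp.mul_const _)).div_const _)
    (tendsto_pi_nhds.2 fun x => (hφ x).comp tendsto_natCast_atTop_atTop)

theorem exists_regVaryAtTop_of_forall_hasRatioLimit (hfmeas : Measurable f)
    (hf : ∀ᶠ r in atTop, f r ≠ 0) (h : ∀ l, 0 < l → ∃ c, 0 < c ∧ HasRatioLimit f l c) :
    ∃ α, RegVaryAtTop f α := by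
  choose φ hφpos hφ using fun x => h (exp x) (exp_pos x)
  have hφadd : ∀ x y, φ (x + y) = φ x * φ y := fun x y =>
    (hφ (x + y)).unique (by rw [exp_add]; exact (hφ x).mul (hφ y) hf (exp_pos y))
  have hφexp := eq_exp_mul_of_measurable_of_map_add
    (measurable_of_hasRatioLimit_exp hfmeas hφ) hφpos hφadd
  refine ⟨log (φ 1), fun l hl => ?_⟩
  have hl' := hφ (log l)
  rwa [exp_log hl, hφexp, ← rpow_def_of_pos hl] at hl'

theorem exists_pos_hasRatioLimit_of_tendsto_div {u : ℝ → ℂ}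
    (hf : ∀ᶠ r in atTop, 0 < f r) {s t : ℝ} {a b : ℂ} (hst : 0 < s / t)
    (hs : Tendsto (fun r => u (r * s) / f r) atTop (𝓝 a))
    (ht : Tendsto (fun r => u (r * t) / f r) atTop (𝓝 b)) (ha : a ≠ 0) (hb : b ≠ 0) :
    ∃ c, 0 < c ∧ HasRatioLimit f (s / t) c := by
  refine ⟨‖a / b‖, norm_pos_iff.2 (div_ne_zero ha hb),
    (tendsto_ratio_of_tendsto_div (f := fun r => (f r : ℂ)) hst hs ht hb).norm.congr' ?_⟩
  have hlr : Tendsto (fun r => s / t * r) atTop atTop := tendsto_id.const_mul_atTop hst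
  filter_upwards [hf, hlr.eventually hf] with r hr hlr
  simp [abs_of_pos hr, abs_of_pos hlr]

theorem tendsto_div_mul_of_hasRatioLimit {u : ℝ → ℂ}
    (hf : ∀ᶠ r in atTop, f r ≠ 0) {t l c : ℝ} {L : ℂ} (hl : 0 < l)
    (hL : Tendsto (fun r => u (r * t) / f r) atTop (𝓝 L)) (hc : HasRatioLimit f l c) :
    Tendsto (fun r => u (r * (l * t)) / f r) atTop (𝓝 (L * c)) := by
  have hlr : Tendsto (fun r => l * r) atTop atTop := tendsto_id.const_mul_atTop hl
  refine ((hL.comp hlr).mul ((Complex.continuous_ofReal.tendsto c).comp hc)).congr' ?_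
  filter_upwards [hlr.eventually hf] with r hr
  rw [Function.comp_apply, Function.comp_apply, show l * r * t = r * (l * t) by ring,
    Complex.ofReal_div, div_mul_div_cancel₀ (Complex.ofReal_ne_zero.2 hr)]

end RatioLimit

theorem stmt9_general (z₀ : ℂ) (hz₀ : 0 < z₀.im) (r₀ : ℝ) (hr₀ : 0 < r₀)
    (q : ℂ → ℂ)
    (f : ℝ → ℝ) (hfmeas : Measurable f) (hfpos : ∀ r > (0:ℝ), 0 < f r)
    (B : Set ℝ) (hBsub : B ⊆ Ioi r₀) (hBmeas : MeasurableSet B)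
    (hBpos : 0 < volume B)
    (hlim : ∀ s ∈ B, ∃ L : ℂ, L ≠ 0 ∧
      Tendsto (fun r : ℝ => q ((r : ℂ) * ((s : ℂ) * z₀)) / (f r : ℂ)) atTop (𝓝 L)) :
    ∃ (α : ℝ) (ω : ℂ), ω ≠ 0 ∧ RegVaryAtTop f α ∧
      ∀ s : ℝ, 0 < s →
        Tendsto (fun r : ℝ => q ((r : ℂ) * ((s : ℂ) * z₀)) / (f r : ℂ)) atTop
          (𝓝 (Complex.I * ω * (((s : ℂ) * z₀) / Complex.I) ^ (α : ℂ))) := by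
  set u : ℝ → ℂ := fun x => q (x * z₀)
  have hu : ∀ s : ℝ, (fun r : ℝ => q ((r : ℂ) * ((s : ℂ) * z₀)) / (f r : ℂ)) =
      fun r => u (r * s) / f r := fun s => by ext r; simp [u, mul_assoc]
  simp only [hu] at hlim ⊢
  choose! L hL0 hL using hlim
  have hf : ∀ᶠ r in atTop, 0 < f r := (eventually_gt_atTop 0).mono hfpos
  have hf₀ : ∀ᶠ r in atTop, f r ≠ 0 := hf.mono fun _ => ne_of_gt
  have hB : B ⊆ Ioi 0 := hBsub.trans (Ioi_subset_Ioi hr₀.le)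
  obtain ⟨α, hα⟩ := exists_regVaryAtTop_of_forall_hasRatioLimit hfmeas hf₀
    (forall_hasRatioLimit_of_measure_pos hf₀ hB hBmeas hBpos fun s hs t ht =>
      exists_pos_hasRatioLimit_of_tendsto_div hf (div_pos (hB hs) (hB ht))
        (hL s hs) (hL t ht) (hL0 s hs) (hL0 t ht))
  obtain ⟨t, ht⟩ := nonempty_of_measure_ne_zero hBpos.ne'
  have ht₀ : 0 < t := hB ht
  have hz₀' : z₀ ≠ 0 := fun h => by simp [h] at hz₀
  have hw : z₀ / Complex.I ≠ 0 := div_ne_zero hz₀' Complex.I_ne_zero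
  refine ⟨α, L t / ((t ^ α : ℝ) * Complex.I * (z₀ / Complex.I) ^ (α : ℂ)), ?_, hα, fun s hs => ?_⟩
  · have : ((t ^ α : ℝ) : ℂ) ≠ 0 := Complex.ofReal_ne_zero.2 (rpow_pos_of_pos ht₀ α).ne'
    exact div_ne_zero (hL0 t ht) (by simp [this, hz₀'])
  · have hst := div_pos hs ht₀
    have hlim := tendsto_div_mul_of_hasRatioLimit hf₀ hst (hL t ht) (hα _ hst)
    rw [div_mul_cancel₀ s ht₀.ne'] at hlim
    convert hlim using 2
    rw [mul_div_assoc, Complex.ofReal_mul_cpow hs hw, ← Complex.ofReal_cpow hs.le,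
      div_rpow hs.le ht₀.le, Complex.ofReal_div]
    field_simp

theorem stmt9 (z₀ : ℂ) (hz₀ : 0 < z₀.im) (r₀ : ℝ) (hr₀ : 0 < r₀)
    (q : ℂ → ℂ)
    (hqcont : ContinuousOn q {w : ℂ | ∃ s : ℝ, s ∈ Ioi r₀ ∧ w = (s : ℂ) * z₀})
    (hqne : ∀ s ∈ Ioi r₀, q ((s : ℂ) * z₀) ≠ 0)
    (f : ℝ → ℝ) (hfmeas : Measurable f) (hfpos : ∀ r > (0:ℝ), 0 < f r)
    (B : Set ℝ) (hBsub : B ⊆ Ioi r₀) (hBmeas : MeasurableSet B)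
    (hBpos : 0 < volume B)
    (hlim : ∀ s ∈ B, ∃ L : ℂ, L ≠ 0 ∧
      Tendsto (fun r : ℝ => q ((r : ℂ) * ((s : ℂ) * z₀)) / (f r : ℂ)) atTop (𝓝 L)) :
    ∃ (α : ℝ) (ω : ℂ), ω ≠ 0 ∧ RegVaryAtTop f α ∧
      ∀ s : ℝ, 0 < s →
        Tendsto (fun r : ℝ => q ((r : ℂ) * ((s : ℂ) * z₀)) / (f r : ℂ)) atTop
          (𝓝 (Complex.I * ω * (((s : ℂ) * z₀) / Complex.I) ^ (α : ℂ))) :=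
  stmt9_general z₀ hz₀ r₀ hr₀ q f hfmeas hfpos B hBsub hBmeas hBpos hlim
end
end

section
/- Let α ∈ ℝ and ω ∈ ℂ, and define Q : ℂ⁺ → ℂ by Q(z) = i·ω·(z/i)^α (principal branch of the power; note z/i ∉ (−∞,0] for z ∈ ℂ⁺, so Q is holomorphic on ℂ⁺). Then Im Q(z) ≥ 0 for all z ∈ ℂ⁺ (i.e. Q is a Nevanlinna function) if and only if either ω = 0, or |α| ≤ 1 and |arg ω| ≤ (π/2)(1 − |α|). -/
open Real

lemma imQ (ω : ℂ) (φ : ℝ) :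
    (Complex.I * ω * Complex.exp ((φ:ℂ) * Complex.I)).im
      = ‖ω‖ * Real.cos (Complex.arg ω + φ) := by
  rcases eq_or_ne ω 0 with rfl | hω
  · simp
  · rw [Real.cos_add, Complex.cos_arg hω, Complex.sin_arg]
    have habs : ‖ω‖ ≠ 0 := norm_ne_zero_iff.mpr hω
    simp [Complex.exp_mul_I, Complex.mul_im, Complex.mul_re,
      Complex.cos_ofReal_re, Complex.sin_ofReal_re]
    field_simp
    ring

lemma aux_cos (c α θ : ℝ) (h1 : |α| ≤ 1) (h2 : |c| ≤ π/2*(1-|α|)) (hθ : |θ| ≤ π/2) :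
    0 ≤ Real.cos (c + α*θ) := by
  have h3 : |α*θ| ≤ |α| * (π/2) := by
    rw [abs_mul]
    exact mul_le_mul_of_nonneg_left hθ (abs_nonneg α)
  have h4 : |c + α*θ| ≤ π/2 := by
    have := abs_add_le c (α*θ)
    nlinarith
  have h5 := abs_le.mp h4
  exact Real.cos_nonneg_of_mem_Icc ⟨by linarith [h5.1], h5.2⟩

lemma aux_main (c α : ℝ) (hc1 : -π < c) (hc2 : c ≤ π)
    (H : ∀ θ : ℝ, |θ| < π/2 → 0 ≤ Real.cos (c + α*θ)) :
    |α| ≤ 1 ∧ |c| ≤ π/2*(1-|α|) := by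
  have hπ := pi_pos
  have h0 := H 0 (by rw [abs_zero]; linarith)
  rw [mul_zero, add_zero] at h0
  have hc : |c| ≤ π/2 := by
    by_contra hcc
    push_neg at hcc
    rcases lt_or_ge c 0 with hneg | hpos
    · have : π/2 < -c := by rw [abs_of_neg hneg] at hcc; linarith
      have := Real.cos_neg_of_pi_div_two_lt_of_lt this (by linarith)
      rw [Real.cos_neg] at this
      linarith
    · have : π/2 < c := by rw [abs_of_nonneg hpos] at hcc; linarith
      have := Real.cos_neg_of_pi_div_two_lt_of_lt this (by linarith)
      linarith
  have K : |c| + |α| * (π/2) ≤ π/2 := by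
    by_contra hK
    push_neg at hK
    have hα : α ≠ 0 := by
      intro h
      rw [h, abs_zero, zero_mul, add_zero] at hK
      linarith
    have hαpos : 0 < |α| := abs_pos.mpr hα
    set x := (π/2 + min π (|c| + |α| * (π/2)))/2 with hx
    have hx1 : π/2 < x := by
      have : π/2 < min π (|c| + |α| * (π/2)) := lt_min (by linarith) hK
      rw [hx]; linarith
    have hx2 : x < π := by
      have h1 : min π (|c| + |α| * (π/2)) ≤ π := min_le_left _ _
      rw [hx]; linarith
    have hx3 : x < |c| + |α| * (π/2) := by
      have h1 : min π (|c| + |α| * (π/2)) ≤ |c| + |α| * (π/2) := min_le_right _ _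
      rw [hx]; linarith
    set s : ℝ := if 0 ≤ c then 1 else -1 with hs
    have hsc : s * c = |c| := by
      rcases le_or_gt 0 c with h | h
      · rw [hs, if_pos h, one_mul, abs_of_nonneg h]
      · rw [hs, if_neg (not_le.mpr h), abs_of_neg h]; ring
    have hss : s * s = 1 := by rw [hs]; split_ifs <;> norm_num
    set θ := (s * x - c)/α with hθdef
    have hcθ : c + α * θ = s * x := by rw [hθdef, mul_div_assoc', mul_comm α, mul_div_assoc, div_self hα, mul_one]; ring
    have hθabs : |θ| = (x - |c|)/|α| := by
      rw [hθdef, abs_div]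
      congr 1
      have : s * x - c = s * (x - |c|) := by
        calc s * x - c = s * x - s * (s * c) := by rw [← mul_assoc, hss, one_mul]
        _ = s * (x - |c|) := by rw [hsc]; ring
      rw [this, abs_mul]
      have hsabs : |s| = 1 := by rw [hs]; split_ifs <;> norm_num
      rw [hsabs, one_mul, abs_of_nonneg (by linarith : (0:ℝ) ≤ x - |c|)]
    have hθlt : |θ| < π/2 := by
      rw [hθabs, div_lt_iff₀ hαpos]
      linarith [mul_comm (π/2) |α|]
    have hcos := H θ hθlt
    rw [hcθ] at hcos
    have hcossx : Real.cos (s * x) = Real.cos x := by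
      rcases le_or_gt 0 c with h | h
      · rw [hs, if_pos h, one_mul]
      · rw [hs, if_neg (not_le.mpr h)]; rw [neg_one_mul, Real.cos_neg]
    rw [hcossx] at hcos
    have := Real.cos_neg_of_pi_div_two_lt_of_lt hx1 (by linarith)
    linarith
  constructor
  · nlinarith [abs_nonneg c]
  · linarith [mul_comm (π/2) |α|, (by linarith : |α| * (π/2) = π/2 * |α|)]

noncomputable section

theorem stmt10 (α : ℝ) (ω : ℂ) (Q : ℂ → ℂ)
    (hQ : ∀ z : ℂ, Q z = Complex.I * ω * (z / Complex.I) ^ (α : ℂ)) :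
    (∀ z : ℂ, 0 < z.im → 0 ≤ (Q z).im) ↔
      (ω = 0 ∨ (|α| ≤ 1 ∧ |Complex.arg ω| ≤ π / 2 * (1 - |α|))) := by
  constructor
  · intro H
    rcases eq_or_ne ω 0 with rfl | hω
    · exact Or.inl rfl
    · right
      have H' : ∀ θ : ℝ, |θ| < π/2 → 0 ≤ Real.cos (Complex.arg ω + α*θ) := by
        intro θ hθ
        have hθπ := abs_lt.mp hθ
        have hπ3 := Real.pi_gt_three
        set z := Complex.I * Complex.exp ((θ:ℂ) * Complex.I) with hz
        have him : z.im = Real.cos θ := by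
          simp [hz, Complex.exp_mul_I, Complex.mul_im, Complex.mul_re, Complex.cos_ofReal_re]
        have hpos : 0 < z.im := by
          rw [him]; exact Real.cos_pos_of_mem_Ioo ⟨by linarith [hθπ.1], hθπ.2⟩
        have hq := H z hpos
        rw [hQ] at hq
        have hdiv : z / Complex.I = Complex.exp ((θ:ℂ) * Complex.I) := by
          rw [hz, mul_comm, mul_div_assoc, div_self Complex.I_ne_zero, mul_one]
        rw [hdiv] at hq
        have hcp : Complex.exp ((θ:ℂ)*Complex.I) ^ (α:ℂ)
            = Complex.exp (((α*θ : ℝ):ℂ) * Complex.I) := by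
          rw [Complex.cpow_def_of_ne_zero (Complex.exp_ne_zero _),
            Complex.log_exp (by simp; linarith [hθπ.1]) (by simp; linarith [hθπ.2])]
          congr 1
          push_cast
          ring
        rw [hcp, imQ] at hq
        nlinarith [norm_pos_iff.mpr hω]
      exact aux_main (Complex.arg ω) α (Complex.neg_pi_lt_arg ω) (Complex.arg_le_pi ω) H'
  · intro h z hz
    rw [hQ]
    rcases h with rfl | ⟨h1, h2⟩
    · simp
    · set w := z / Complex.I with hw
      have hwre : 0 < w.re := by
        rw [hw]
        simpa [Complex.div_I] using hz
      have hw0 : w ≠ 0 := by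
        intro h
        rw [h] at hwre; simp at hwre
      have harg : |w.arg| < π/2 := Complex.abs_arg_lt_pi_div_two_iff.mpr (Or.inl hwre)
      have hcp : w ^ (α:ℂ) = ((‖w‖ ^ α : ℝ):ℂ)
          * Complex.exp (((α * w.arg : ℝ):ℂ) * Complex.I) := by
        rw [Complex.cpow_def_of_ne_zero hw0]
        have hlog : Complex.log w
            = (Real.log ‖w‖ : ℂ) + (w.arg:ℂ) * Complex.I := rfl
        rw [hlog, add_mul, Complex.exp_add]
        congr 1
        · rw [Real.rpow_def_of_pos (norm_pos_iff.mpr hw0), Complex.ofReal_exp]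
          push_cast
          ring_nf
        · congr 1
          push_cast
          ring
      rw [hcp]
      have hre : Complex.I * ω * (((‖w‖ ^ α : ℝ):ℂ)
            * Complex.exp (((α * w.arg : ℝ):ℂ) * Complex.I))
          = ((‖w‖ ^ α : ℝ):ℂ)
            * (Complex.I * ω * Complex.exp (((α * w.arg : ℝ):ℂ) * Complex.I)) := by ring
      rw [hre, Complex.im_ofReal_mul, imQ]
      exact mul_nonneg (Real.rpow_nonneg (norm_nonneg w) α)
        (mul_nonneg (norm_nonneg ω) (aux_cos _ _ _ h1 h2 (le_of_lt harg)))
end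
end

section
/- Let c, d ∈ ℂ with d ≠ 0 and let γ > 0 with γ ≠ 1; assume (γ−1)/γ is not a non-positive integer. Define u₊(x) = x·exp(−(d/γ)x^γ)·M( (γ+1−c/d)/(2γ), (γ+1)/γ, (2d/γ)x^γ ) and u₋(x) = exp(−(d/γ)x^γ)·M( (γ−1−c/d)/(2γ), (γ−1)/γ, (2d/γ)x^γ ). Then as x → 0⁺: u₊(x) = x − (c/(γ(γ+1)))·x^{γ+1} + O(x^{2γ+1}), u₊'(x) = 1 − (c/γ)·x^γ + O(x^{2γ}), u₋(x) = 1 − (c/((γ−1)γ))·x^γ + O(x^{2γ}), and u₋'(x) = −(c/(γ−1))·x^{γ−1} + O(x^{2γ−1}). -/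
/-!
The series of `M(a, b, ·)` has infinite radius of convergence by the ratio test, so
`M(a, b, ·)` is entire with `M(a, b, 0) = 1` and `M'(a, b, 0) = a / b`. Hence
`f(s) = exp(w s) M(a, b, v s)` is entire with `f(s) = 1 + (w + a v / b) s + O(s²)` and
`f'(s) = f'(0) + O(s)`. Substituting `s = x^γ`, which tends to `0` as `x → 0⁺`, and multiplying
by `x` for `u₊`, gives all four expansions; for both solutions `w + a v / b` collapses to the
coefficient `-c / (γ (γ ± 1))` of the statement.
-/

open Real Filter Topology Asymptotics

noncomputable section

/-- Kummer's confluent hypergeometric function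
`M(a,b,x) = ∑ₙ ((a)ₙ/(b)ₙ) xⁿ/n!`, where `(a)ₙ` is the Pochhammer symbol. -/
def kummerM (a b x : ℂ) : ℂ :=
  ∑' n : ℕ, ((ascPochhammer ℂ n).eval a / (ascPochhammer ℂ n).eval b) * x ^ n /
    (n.factorial : ℂ)

open FormalMultilinearSeries

def kummerCoeff (a b : ℂ) (n : ℕ) : ℂ :=
  (ascPochhammer ℂ n).eval a / (ascPochhammer ℂ n).eval b / (n.factorial : ℂ)

lemma kummerCoeff_succ (a b : ℂ) (n : ℕ) :
    kummerCoeff a b (n + 1) = kummerCoeff a b n * ((a + n) / (b + n) / (n + 1)) := by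
  simp only [kummerCoeff, ascPochhammer_succ_eval, Nat.factorial_succ, Nat.cast_mul,
    Nat.cast_succ]
  rw [div_mul_div_comm, div_mul_div_comm, div_div, div_div]
  ring

lemma tendsto_kummerCoeff_ratio_mul (a b z : ℂ) :
    Tendsto (fun n : ℕ => (a + n) / (b + n) / (n + 1) * z) atTop (𝓝 0) := by
  have h1 : Tendsto (fun n : ℕ => (a + 1 * n) / (b + 1 * n)) atTop (𝓝 (1 / 1)) :=
    tendsto_add_mul_div_add_mul_atTop_nhds a b 1 one_ne_zero
  have h2 : Tendsto (fun n : ℕ => (1 : ℂ) / (n + 1)) atTop (𝓝 0) :=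
    tendsto_one_div_add_atTop_nhds_zero_nat
  simpa [div_eq_mul_inv] using (h1.mul h2).mul_const z

lemma summable_norm_kummerCoeff_mul_pow (a b z : ℂ) :
    Summable fun n => ‖kummerCoeff a b n * z ^ n‖ := by
  have hratio := (tendsto_kummerCoeff_ratio_mul a b z).norm
  rw [norm_zero] at hratio
  refine summable_of_ratio_norm_eventually_le (r := 1 / 2) (by norm_num) ?_
  filter_upwards [hratio.eventually (gt_mem_nhds (by norm_num : (0 : ℝ) < 1 / 2))] with n hn
  calc ‖‖kummerCoeff a b (n + 1) * z ^ (n + 1)‖‖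
      = ‖(a + n) / (b + n) / (n + 1) * z‖ * ‖kummerCoeff a b n * z ^ n‖ := by
        rw [norm_norm, kummerCoeff_succ, ← norm_mul, pow_succ]; ring_nf
    _ ≤ 1 / 2 * ‖‖kummerCoeff a b n * z ^ n‖‖ := by rw [norm_norm]; gcongr

lemma kummerM_eq_ofScalarsSum (a b : ℂ) : kummerM a b = ofScalarsSum (kummerCoeff a b) := by
  ext z
  simp only [kummerM, ofScalarsSum_eq_tsum, kummerCoeff, smul_eq_mul]
  congr! 2 with n
  ring

lemma radius_ofScalars_kummerCoeff (a b : ℂ) :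
    (ofScalars ℂ (kummerCoeff a b)).radius = ⊤ := by
  refine radius_eq_top_of_summable_norm _ fun r => ?_
  simpa [ofScalars_norm] using summable_norm_kummerCoeff_mul_pow a b r

lemma hasFPowerSeriesOnBall_kummerM (a b : ℂ) :
    HasFPowerSeriesOnBall (kummerM a b) (ofScalars ℂ (kummerCoeff a b)) 0 ⊤ := by
  rw [kummerM_eq_ofScalarsSum, ← radius_ofScalars_kummerCoeff a b]
  exact (ofScalars ℂ (kummerCoeff a b)).hasFPowerSeriesOnBall
    (by simp [radius_ofScalars_kummerCoeff])

lemma differentiable_kummerM (a b : ℂ) : Differentiable ℂ (kummerM a b) := fun z =>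
  ((hasFPowerSeriesOnBall_kummerM a b).analyticAt_of_mem (by simp)).differentiableAt

lemma kummerM_zero (a b : ℂ) : kummerM a b 0 = 1 := by
  simp [kummerM_eq_ofScalarsSum, ofScalarsSum_zero, kummerCoeff]

lemma hasDerivAt_kummerM_zero (a b : ℂ) : HasDerivAt (kummerM a b) (a / b) 0 := by
  simpa [ofScalars_apply_eq, kummerCoeff] using
    (hasFPowerSeriesOnBall_kummerM a b).hasFPowerSeriesAt.hasDerivAt

def expKummer (a b w v s : ℂ) : ℂ :=
  Complex.exp (w * s) * kummerM a b (v * s)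

lemma differentiable_expKummer (a b w v : ℂ) : Differentiable ℂ (expKummer a b w v) :=
  ((differentiable_id.const_mul w).cexp).mul
    ((differentiable_kummerM a b).comp (differentiable_id.const_mul v))

lemma expKummer_zero (a b w v : ℂ) : expKummer a b w v 0 = 1 := by
  simp [expKummer, kummerM_zero]

lemma hasDerivAt_expKummer_zero (a b w v : ℂ) :
    HasDerivAt (expKummer a b w v) (w + a / b * v) 0 := by
  have hexp : HasDerivAt (fun s => Complex.exp (w * s)) w 0 := by
    simpa using ((hasDerivAt_id (0 : ℂ)).const_mul w).cexp
  have hM : HasDerivAt (fun s => kummerM a b (v * s)) (a / b * v) 0 := by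
    simpa [Function.comp_def] using (hasDerivAt_kummerM_zero a b).comp_of_eq (0 : ℂ)
      ((hasDerivAt_id (0 : ℂ)).const_mul v) (by simp)
  have h := hexp.fun_mul hM
  simp only [mul_zero, Complex.exp_zero, kummerM_zero, one_mul, mul_one] at h
  exact h

theorem AnalyticAt.isBigO_sub_sub_smul_deriv {𝕜 E : Type*} [NontriviallyNormedField 𝕜]
    [NormedAddCommGroup E] [NormedSpace 𝕜 E] {f : 𝕜 → E} {z : 𝕜} (hf : AnalyticAt 𝕜 f z) :
    (fun s => f (z + s) - f z - s • deriv f z) =O[𝓝 0] fun s => ‖s‖ ^ 2 := by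
  obtain ⟨p, hp⟩ := hf
  have hp0 : p.coeff 0 = f z := hp.coeff_zero _
  refine (hp.isBigO_sub_partialSum_pow 2).congr_left fun s => ?_
  simp [partialSum, Finset.sum_range_succ, hp0, hp.deriv, sub_sub]

section RpowAsymptotics

variable {f : ℂ → ℂ} {γ : ℝ}

lemma tendsto_ofReal_rpow_nhdsGT_zero (hγ : 0 < γ) :
    Tendsto (fun x : ℝ => ((x ^ γ : ℝ) : ℂ)) (𝓝[>] 0) (𝓝 0) := by
  have h : Tendsto (fun x : ℝ => x ^ γ) (𝓝[>] 0) (𝓝 0) := by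
    simpa [Real.zero_rpow hγ.ne'] using
      (Real.continuousAt_rpow_const 0 γ (Or.inr hγ.le)).tendsto.mono_left nhdsWithin_le_nhds
  simpa [Function.comp_def] using (Complex.continuous_ofReal.tendsto 0).comp h

lemma isBigO_comp_ofReal_rpow_sub (hf : AnalyticAt ℂ f 0) (hγ : 0 < γ) :
    (fun x : ℝ => f (x ^ γ : ℝ) - (f 0 + deriv f 0 * (x ^ γ : ℝ)))
      =O[𝓝[>] 0] fun x => x ^ (2 * γ) := by
  have h := hf.isBigO_sub_sub_smul_deriv.comp_tendsto (tendsto_ofReal_rpow_nhdsGT_zero hγ)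
  refine h.congr' (Eventually.of_forall fun x => ?_) ?_
  · simp [sub_sub, mul_comm]
  · filter_upwards [self_mem_nhdsWithin] with x (hx : 0 < x)
    rw [Function.comp_apply, Complex.norm_real, Real.norm_of_nonneg (by positivity),
      ← Real.rpow_natCast, ← Real.rpow_mul hx.le, mul_comm]
    norm_num

lemma hasDerivAt_comp_ofReal_rpow {x : ℝ} (hx : 0 < x) (hf : DifferentiableAt ℂ f (x ^ γ : ℝ)) :
    HasDerivAt (fun y : ℝ => f (y ^ γ : ℝ)) (deriv f (x ^ γ : ℝ) * (γ * x ^ (γ - 1) : ℝ)) x :=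
  hf.hasDerivAt.comp x (Real.hasDerivAt_rpow_const (Or.inl hx.ne')).ofReal_comp

lemma isBigO_deriv_comp_ofReal_rpow_sub (hf : Differentiable ℂ f) (hγ : 0 < γ) :
    (fun x : ℝ => deriv (fun y : ℝ => f (y ^ γ : ℝ)) x - γ * deriv f 0 * (x ^ (γ - 1) : ℝ))
      =O[𝓝[>] 0] fun x => x ^ (2 * γ - 1) := by
  have hf' : (fun x : ℝ => deriv f (x ^ γ : ℝ) - deriv f 0) =O[𝓝[>] 0] fun x => x ^ γ :=
    (((hf.analyticAt 0).deriv.differentiableAt.isBigO_sub).comp_tendsto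
      (tendsto_ofReal_rpow_nhdsGT_zero hγ)).trans
      ((Complex.isTheta_ofReal _ _).isBigO.congr_left fun x => by simp)
  refine (((Complex.isTheta_ofReal (fun x => x ^ (γ - 1)) _).isBigO.const_mul_left
    (γ : ℂ)).mul hf').congr' ?_ ?_
  · filter_upwards [self_mem_nhdsWithin] with x (hx : 0 < x)
    rw [(hasDerivAt_comp_ofReal_rpow hx (hf _)).deriv]
    push_cast
    ring
  · filter_upwards [self_mem_nhdsWithin] with x (hx : 0 < x)
    rw [← Real.rpow_add hx]
    ring_nf

lemma isBigO_mul_comp_ofReal_rpow_sub (hf : AnalyticAt ℂ f 0) (hγ : 0 < γ) :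
    (fun x : ℝ => x * f (x ^ γ : ℝ) - (x * f 0 + deriv f 0 * (x ^ (γ + 1) : ℝ)))
      =O[𝓝[>] 0] fun x => x ^ (2 * γ + 1) := by
  refine ((Complex.isTheta_ofReal (fun x => x) _).isBigO.mul
    (isBigO_comp_ofReal_rpow_sub hf hγ)).congr' ?_ ?_
  · filter_upwards [self_mem_nhdsWithin] with x (hx : 0 < x)
    rw [Real.rpow_add_one hx.ne']
    push_cast
    ring
  · filter_upwards [self_mem_nhdsWithin] with x (hx : 0 < x)
    rw [Real.rpow_add_one hx.ne']
    ring

lemma deriv_mul_comp_ofReal_rpow {x : ℝ} (hx : 0 < x) (hf : DifferentiableAt ℂ f (x ^ γ : ℝ)) :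
    deriv (fun y : ℝ => y * f (y ^ γ : ℝ)) x
      = f (x ^ γ : ℝ) + x * deriv (fun y : ℝ => f (y ^ γ : ℝ)) x :=
  (((hasDerivAt_id x).ofReal_comp.fun_mul
    (hasDerivAt_comp_ofReal_rpow hx hf).differentiableAt.hasDerivAt).deriv).trans (by simp)

lemma isBigO_deriv_mul_comp_ofReal_rpow_sub (hf : Differentiable ℂ f) (hγ : 0 < γ) :
    (fun x : ℝ => deriv (fun y : ℝ => y * f (y ^ γ : ℝ)) x
        - (f 0 + (γ + 1) * deriv f 0 * (x ^ γ : ℝ)))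
      =O[𝓝[>] 0] fun x => x ^ (2 * γ) := by
  have hderiv : (fun x : ℝ => x * (deriv (fun y : ℝ => f (y ^ γ : ℝ)) x
      - γ * deriv f 0 * (x ^ (γ - 1) : ℝ))) =O[𝓝[>] 0] fun x => x ^ (2 * γ) := by
    refine ((Complex.isTheta_ofReal (fun x => x) _).isBigO.mul
      (isBigO_deriv_comp_ofReal_rpow_sub hf hγ)).congr' EventuallyEq.rfl ?_
    filter_upwards [self_mem_nhdsWithin] with x (hx : 0 < x)
    rw [← Real.rpow_one_add' hx.le (by linarith)]
    ring_nf
  refine ((isBigO_comp_ofReal_rpow_sub (hf.analyticAt 0) hγ).add hderiv).congr' ?_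
    EventuallyEq.rfl
  filter_upwards [self_mem_nhdsWithin] with x (hx : 0 < x)
  have hx0 : (x : ℂ) ≠ 0 := mod_cast hx.ne'
  rw [deriv_mul_comp_ofReal_rpow hx (hf _), Real.rpow_sub_one hx.ne']
  push_cast
  field_simp
  ring

end RpowAsymptotics

theorem stmt13_general (c d : ℂ) (hd : d ≠ 0) (γ : ℝ) (hγ : 0 < γ) (hγ1 : γ ≠ 1)
    (uPlus uMinus : ℝ → ℂ)
    (huPlus : ∀ x : ℝ, uPlus x =
      (x : ℂ) * Complex.exp (-(d / (γ : ℂ)) * ((x ^ γ : ℝ) : ℂ)) *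
        kummerM (((γ : ℂ) + 1 - c / d) / (2 * (γ : ℂ))) (((γ : ℂ) + 1) / (γ : ℂ))
          ((2 * d / (γ : ℂ)) * ((x ^ γ : ℝ) : ℂ)))
    (huMinus : ∀ x : ℝ, uMinus x =
      Complex.exp (-(d / (γ : ℂ)) * ((x ^ γ : ℝ) : ℂ)) *
        kummerM (((γ : ℂ) - 1 - c / d) / (2 * (γ : ℂ))) (((γ : ℂ) - 1) / (γ : ℂ))
          ((2 * d / (γ : ℂ)) * ((x ^ γ : ℝ) : ℂ))) :
    ((fun x : ℝ => uPlus x -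
        ((x : ℂ) - c / ((γ : ℂ) * ((γ : ℂ) + 1)) * ((x ^ (γ + 1) : ℝ) : ℂ)))
      =O[𝓝[>] (0:ℝ)] fun x : ℝ => x ^ (2 * γ + 1)) ∧
    ((fun x : ℝ => deriv uPlus x - (1 - c / (γ : ℂ) * ((x ^ γ : ℝ) : ℂ)))
      =O[𝓝[>] (0:ℝ)] fun x : ℝ => x ^ (2 * γ)) ∧
    ((fun x : ℝ => uMinus x - (1 - c / (((γ : ℂ) - 1) * (γ : ℂ)) * ((x ^ γ : ℝ) : ℂ)))
      =O[𝓝[>] (0:ℝ)] fun x : ℝ => x ^ (2 * γ)) ∧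
    ((fun x : ℝ => deriv uMinus x - (-(c / ((γ : ℂ) - 1)) * ((x ^ (γ - 1) : ℝ) : ℂ)))
      =O[𝓝[>] (0:ℝ)] fun x : ℝ => x ^ (2 * γ - 1)) := by
  have hγ0 : (γ : ℂ) ≠ 0 := mod_cast hγ.ne'
  have hγm1 : (γ : ℂ) - 1 ≠ 0 := sub_ne_zero.mpr (mod_cast hγ1)
  have hγp1 : (γ : ℂ) + 1 ≠ 0 := mod_cast (by linarith : γ + 1 ≠ 0)
  set fP := expKummer (((γ : ℂ) + 1 - c / d) / (2 * γ)) (((γ : ℂ) + 1) / γ)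
    (-(d / γ)) (2 * d / γ)
  set fM := expKummer (((γ : ℂ) - 1 - c / d) / (2 * γ)) (((γ : ℂ) - 1) / γ)
    (-(d / γ)) (2 * d / γ)
  have hfP0 : fP 0 = 1 := expKummer_zero _ _ _ _
  have hfM0 : fM 0 = 1 := expKummer_zero _ _ _ _
  have hfP' : deriv fP 0 = -(c / (γ * (γ + 1))) := by
    rw [(hasDerivAt_expKummer_zero _ _ _ _).deriv]; field_simp; ring
  have hfM' : deriv fM 0 = -(c / ((γ - 1) * γ)) := by
    rw [(hasDerivAt_expKummer_zero _ _ _ _).deriv]; field_simp; ring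
  have hP : Differentiable ℂ fP := differentiable_expKummer _ _ _ _
  have hM : Differentiable ℂ fM := differentiable_expKummer _ _ _ _
  have huP : uPlus = fun y : ℝ => y * fP (y ^ γ : ℝ) := funext fun y => by
    rw [huPlus, mul_assoc]; rfl
  have huM : uMinus = fun y : ℝ => fM (y ^ γ : ℝ) := funext huMinus
  refine ⟨?_, ?_, ?_, ?_⟩
  · refine (isBigO_mul_comp_ofReal_rpow_sub (hP.analyticAt 0) hγ).congr_left fun x => ?_
    rw [huP, hfP0, hfP']
    ring
  · refine (isBigO_deriv_mul_comp_ofReal_rpow_sub hP hγ).congr_left fun x => ?_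
    rw [huP, hfP0, hfP']
    field_simp
    ring
  · refine (isBigO_comp_ofReal_rpow_sub (hM.analyticAt 0) hγ).congr_left fun x => ?_
    rw [huM, hfM0, hfM']
    ring
  · refine (isBigO_deriv_comp_ofReal_rpow_sub hM hγ).congr_left fun x => ?_
    rw [huM, hfM']
    field_simp

theorem stmt13 (c d : ℂ) (hd : d ≠ 0) (γ : ℝ) (hγ : 0 < γ) (hγ1 : γ ≠ 1)
    (hb : ∀ n : ℕ, (γ - 1) / γ ≠ -(n : ℝ))
    (uPlus uMinus : ℝ → ℂ)
    (huPlus : ∀ x : ℝ, uPlus x =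
      (x : ℂ) * Complex.exp (-(d / (γ : ℂ)) * ((x ^ γ : ℝ) : ℂ)) *
        kummerM (((γ : ℂ) + 1 - c / d) / (2 * (γ : ℂ))) (((γ : ℂ) + 1) / (γ : ℂ))
          ((2 * d / (γ : ℂ)) * ((x ^ γ : ℝ) : ℂ)))
    (huMinus : ∀ x : ℝ, uMinus x =
      Complex.exp (-(d / (γ : ℂ)) * ((x ^ γ : ℝ) : ℂ)) *
        kummerM (((γ : ℂ) - 1 - c / d) / (2 * (γ : ℂ))) (((γ : ℂ) - 1) / (γ : ℂ))
          ((2 * d / (γ : ℂ)) * ((x ^ γ : ℝ) : ℂ))) :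
    ((fun x : ℝ => uPlus x -
        ((x : ℂ) - c / ((γ : ℂ) * ((γ : ℂ) + 1)) * ((x ^ (γ + 1) : ℝ) : ℂ)))
      =O[𝓝[>] (0:ℝ)] fun x : ℝ => x ^ (2 * γ + 1)) ∧
    ((fun x : ℝ => deriv uPlus x - (1 - c / (γ : ℂ) * ((x ^ γ : ℝ) : ℂ)))
      =O[𝓝[>] (0:ℝ)] fun x : ℝ => x ^ (2 * γ)) ∧
    ((fun x : ℝ => uMinus x - (1 - c / (((γ : ℂ) - 1) * (γ : ℂ)) * ((x ^ γ : ℝ) : ℂ)))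
      =O[𝓝[>] (0:ℝ)] fun x : ℝ => x ^ (2 * γ)) ∧
    ((fun x : ℝ => deriv uMinus x - (-(c / ((γ : ℂ) - 1)) * ((x ^ (γ - 1) : ℝ) : ℂ)))
      =O[𝓝[>] (0:ℝ)] fun x : ℝ => x ^ (2 * γ - 1)) :=
  stmt13_general c d hd γ hγ hγ1 uPlus uMinus huPlus huMinus
end
end

section
/- Let ρ₁, ρ₂, κ₁, κ₂ > 0 and κ₃ ∈ ℝ with κ₃² ≤ κ₁κ₂, and set κ = √(κ₁κ₂ − κ₃²), ρ₃ = (ρ₁+ρ₂)/2, α = (ρ₂−ρ₁)/(ρ₂+ρ₁). Define ω ∈ ℂ by: ω = ((2κ)^{1+α}/(κ₂ρ₃^α))·(Γ(−α)/Γ(1+α))·Γ(1 + (α/2)(1 + iκ₃/κ)) / Γ(−(α/2)(1 − iκ₃/κ)) if ρ₁ ≠ ρ₂ and κ > 0; ω = ((iακ₃)^{1+α}/(κ₂ρ₃^α))·Γ(−α)/Γ(1+α) if ρ₁ ≠ ρ₂ and κ = 0; and ω = (κ − iκ₃)/κ₂ if ρ₁ = ρ₂. Then: if ρ₁ ≠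 ρ₂ and κ > 0, arg ω = −arctan[ tan((π/2)(1−|α|)) · tanh( π|α|κ₃/(2κ) ) ]; if ρ₁ = ρ₂ and κ > 0, arg ω = −arctan(κ₃/κ); and if ρ₁ = ρ₂ and κ = 0, arg ω = −sgn(κ₃)·(π/2)(1−|α|). -/
/-!
With `z = (α/2)(1 + iκ₃/κ)` the last Gamma quotient is `Γ(1+z) / conj Γ(-z) = Γ(1+z) Γ(-z) / |Γ(-z)|²`,
and the reflection formula gives `Γ(1+z) Γ(-z) = -π / sin(πz)`. Since `α Γ(-α) / Γ(1+α) < 0` for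
`0 < |α| < 1`, `ω` is a positive multiple of `(α sin(πz))⁻¹`, and `α sin(πz)` has positive real part
`α sin(πα/2) cosh(π Im z)`. Hence `arg ω = -arctan(cot(πα/2) tanh(πακ₃/(2κ)))`, an even function of `α`.
The cases `ρ₁ = ρ₂` are elementary.
-/

open Real

noncomputable section

open ComplexConjugate

theorem Real.mul_sin_pos {x : ℝ} (h0 : x ≠ 0) (hπ : |x| < π) : 0 < x * Real.sin x := by
  have heven : x * Real.sin x = |x| * Real.sin |x| := by
    rcases le_total 0 x with hx | hx
    · rw [abs_of_nonneg hx]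
    · rw [abs_of_nonpos hx, Real.sin_neg, neg_mul_neg]
  rw [heven]
  exact mul_pos (abs_pos.2 h0) (Real.sin_pos_of_pos_of_lt_pi (abs_pos.2 h0) hπ)

theorem Real.mul_Gamma_neg_div_Gamma_one_add_neg {α : ℝ} (h0 : α ≠ 0) (h1 : |α| < 1) :
    α * (Real.Gamma (-α) / Real.Gamma (1 + α)) < 0 := by
  obtain ⟨hlo, hhi⟩ := abs_lt.1 h1
  have hrec : Real.Gamma (1 - α) = -α * Real.Gamma (-α) := by
    rw [sub_eq_neg_add]; exact Real.Gamma_add_one (neg_ne_zero.2 h0)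
  have hpos : 0 < Real.Gamma (1 - α) := Real.Gamma_pos_of_pos (by linarith)
  have hpos' : 0 < Real.Gamma (1 + α) := Real.Gamma_pos_of_pos (by linarith)
  rw [← mul_div_assoc]
  exact div_neg_of_neg_of_pos (by linarith) hpos'

theorem Real.cos_div_sin_mul_tanh_mul (x y : ℝ) :
    Real.cos x / Real.sin x * Real.tanh (x * y) =
      Real.tan (π / 2 - |x|) * Real.tanh (|x| * y) := by
  rw [Real.tan_pi_div_two_sub, Real.tan_eq_sin_div_cos, inv_div]
  rcases le_total 0 x with hx | hx
  · rw [abs_of_nonneg hx]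
  · rw [abs_of_nonpos hx, Real.cos_neg, Real.sin_neg, neg_mul, Real.tanh_neg, div_neg,
      neg_mul_neg]

namespace Complex

theorem arg_eq_arctan_of_re_pos {z : ℂ} (h : 0 < z.re) : arg z = Real.arctan (z.im / z.re) := by
  rw [← tan_arg, Real.arctan_tan]
  · exact neg_pi_div_two_lt_arg_iff.2 (Or.inl h)
  · exact arg_lt_pi_div_two_iff.2 (Or.inl h)

theorem arg_div_ofReal_of_pos {r : ℝ} (hr : 0 < r) (z : ℂ) : arg (z / r) = arg z := by
  rw [div_eq_mul_inv, ← ofReal_inv, arg_mul_real (inv_pos.2 hr)]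

theorem arg_ofReal_mul_inv_of_re_pos {r : ℝ} (hr : 0 < r) {w : ℂ} (hw : 0 < w.re) :
    arg (r * w⁻¹) = -arg w := by
  rw [arg_real_mul _ hr, arg_inv, if_neg]
  exact fun h => (arg_eq_pi_iff.1 h).1.not_gt hw

theorem arg_neg_I_mul_ofReal (y : ℝ) : arg (-(I * y)) = -Real.sign y * (π / 2) := by
  rcases lt_trichotomy y 0 with hy | rfl | hy
  · rw [Real.sign_of_neg hy, arg_eq_pi_div_two_iff.2 ⟨by simp, by simpa using hy⟩]
    ring
  · simp
  · rw [Real.sign_of_pos hy, arg_eq_neg_pi_div_two_iff.2 ⟨by simp, by simpa using hy⟩]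
    ring

theorem re_sin (z : ℂ) : (sin z).re = Real.sin z.re * Real.cosh z.im := by
  rw [sin_eq, ← ofReal_sin, ← ofReal_cos, ← ofReal_cosh, ← ofReal_sinh]
  simp only [add_re, mul_re, mul_im, ofReal_re, ofReal_im, I_re, I_im]
  ring

theorem im_sin (z : ℂ) : (sin z).im = Real.cos z.re * Real.sinh z.im := by
  rw [sin_eq, ← ofReal_sin, ← ofReal_cos, ← ofReal_cosh, ← ofReal_sinh]
  simp only [add_im, mul_re, mul_im, ofReal_re, ofReal_im, I_re, I_im]
  ring

theorem Gamma_one_add_mul_Gamma_neg (z : ℂ) :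
    Gamma (1 + z) * Gamma (-z) = -(π / sin (π * z)) := by
  rcases eq_or_ne z 0 with rfl | hz
  · simp -- both sides are junk zeros: `Gamma 0 = 0` and `π / sin 0 = 0`
  have h1 : Gamma (1 + z) = z * Gamma z := by rw [add_comm]; exact Gamma_add_one z hz
  have h2 : Gamma (1 - z) = -z * Gamma (-z) := by
    rw [sub_eq_neg_add]; exact Gamma_add_one (-z) (neg_ne_zero.2 hz)
  rw [h1, ← Gamma_mul_Gamma_one_sub z, h2]
  ring

theorem Gamma_one_add_div_conj_Gamma_neg (z : ℂ) :
    Gamma (1 + z) / conj (Gamma (-z)) =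
      ((-π / normSq (Gamma (-z)) : ℝ) : ℂ) * (sin (π * z))⁻¹ := by
  rw [div_eq_mul_inv, inv_def, conj_conj, normSq_conj, ← mul_assoc,
    Gamma_one_add_mul_Gamma_neg]
  push_cast
  ring

theorem Gamma_neg_ne_zero_of_re_eq_half {α : ℝ} (h0 : α ≠ 0) (h1 : |α| < 1) {z : ℂ}
    (hz : z.re = α / 2) : Gamma (-z) ≠ 0 := by
  refine Gamma_ne_zero fun m hm => h0 ?_
  have hre : α / 2 = m := by simpa [hz] using congrArg re hm
  have hm0 : m = 0 := by
    have : (m : ℝ) < 1 := by rw [← hre]; linarith [abs_lt.1 h1]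
    exact_mod_cast Nat.lt_one_iff.1 (by exact_mod_cast this)
  rw [hm0, Nat.cast_zero] at hre
  linarith

theorem arg_mul_Gamma_one_add_div_conj_Gamma_neg {α c : ℝ}
    (h0 : α ≠ 0) (h1 : |α| < 1) (hc : 0 < c) {z : ℂ} (hz : z.re = α / 2) :
    arg (c * (Gamma (-α) / Gamma (1 + α)) * (Gamma (1 + z) / conj (Gamma (-z)))) =
      -Real.arctan (Real.cos (π * z.re) / Real.sin (π * z.re) * Real.tanh (π * z.im)) := by
  have hnorm : 0 < normSq (Gamma (-z)) :=
    normSq_pos.2 (Gamma_neg_ne_zero_of_re_eq_half h0 h1 hz)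
  have hratio := Real.mul_Gamma_neg_div_Gamma_one_add_neg h0 h1
  set m : ℝ := c * (Real.Gamma (-α) / Real.Gamma (1 + α)) * (-π / normSq (Gamma (-z)))
  have hm : 0 < α * m := by
    have : α * m = c * -(α * (Real.Gamma (-α) / Real.Gamma (1 + α))) * π / normSq (Gamma (-z)) := by
      ring
    rw [this]
    have hneg := neg_pos.2 hratio
    positivity
  have hsin : 0 < α * Real.sin (π * z.re) := by
    have hx : |π * z.re| < π := by
      rw [hz, abs_mul, abs_of_pos pi_pos, abs_div, abs_two]
      exact mul_lt_of_lt_one_right pi_pos (by linarith)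
    have hpos := Real.mul_sin_pos (by rw [hz]; positivity) hx
    rw [hz, show π * (α / 2) * Real.sin (π * (α / 2)) = π / 2 * (α * Real.sin (π * (α / 2))) by
      ring] at hpos
    rw [hz]
    exact pos_of_mul_pos_right hpos (by positivity)
  have hsin_re : (sin (π * z)).re = Real.sin (π * z.re) * Real.cosh (π * z.im) := by
    rw [re_sin, re_ofReal_mul, im_ofReal_mul]
  have hsin_im : (sin (π * z)).im = Real.cos (π * z.re) * Real.sinh (π * z.im) := by
    rw [im_sin, re_ofReal_mul, im_ofReal_mul]
  have hw : 0 < ((α : ℂ) * sin (π * z)).re := by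
    rw [re_ofReal_mul, hsin_re, ← mul_assoc]
    exact mul_pos hsin (Real.cosh_pos _)
  have hω : (c : ℂ) * (Gamma (-α) / Gamma (1 + α)) * (Gamma (1 + z) / conj (Gamma (-z))) =
      ((α * m : ℝ) : ℂ) * ((α : ℂ) * sin (π * z))⁻¹ := by
    rw [Gamma_one_add_div_conj_Gamma_neg, ← ofReal_neg, ← ofReal_one, ← ofReal_add,
      Gamma_ofReal, Gamma_ofReal]
    have : (α : ℂ) ≠ 0 := by exact_mod_cast h0
    simp only [m]
    push_cast
    field_simp
  rw [hω, arg_ofReal_mul_inv_of_re_pos hm hw, arg_eq_arctan_of_re_pos hw, re_ofReal_mul,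
    im_ofReal_mul, hsin_re, hsin_im, Real.tanh_eq_sinh_div_cosh]
  have hcosh := (Real.cosh_pos (π * z.im)).ne'
  have hsin0 := hsin.ne'
  congr 2
  field_simp

theorem arg_mul_Gamma_one_add_div_Gamma_neg_of_half_mul {α c : ℝ} (h0 : α ≠ 0)
    (h1 : |α| < 1) (hc : 0 < c) (s : ℝ) :
    arg (c * (Gamma (-α) / Gamma (1 + α)) *
        (Gamma (1 + (α / 2) * (1 + I * s)) / Gamma (-(α / 2) * (1 - I * s)))) =
      -Real.arctan (Real.tan (π / 2 * (1 - |α|)) * Real.tanh (π * |α| * s / 2)) := by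
  set z : ℂ := (α / 2) * (1 + I * s)
  have hz : z = ((α / 2 : ℝ) : ℂ) + ((α * s / 2 : ℝ) : ℂ) * I := by
    simp only [z]; push_cast; ring
  have hconj : -((α : ℂ) / 2) * (1 - I * s) = conj (-z) := by
    rw [hz]; simp only [map_neg, map_add, map_mul, conj_ofReal, conj_I]; push_cast; ring
  have hre : z.re = α / 2 := by rw [hz]; simp
  have him : z.im = α * s / 2 := by rw [hz]; simp
  rw [hconj, Gamma_conj, arg_mul_Gamma_one_add_div_conj_Gamma_neg
    h0 h1 hc hre, hre, him, show π * (α * s / 2) = π * (α / 2) * s by ring,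
    Real.cos_div_sin_mul_tanh_mul, abs_mul, abs_of_pos pi_pos, abs_div, abs_two]
  congr 4 <;> ring

end Complex

theorem abs_sub_div_add_lt_one {a b : ℝ} (ha : 0 < a) (hb : 0 < b) : |(b - a) / (b + a)| < 1 := by
  rw [abs_div, abs_of_pos (add_pos hb ha), div_lt_one (add_pos hb ha), abs_sub_lt_iff]
  constructor <;> linarith

theorem stmt14_general (ρ₁ ρ₂ κ₂ κ₃ : ℝ)
    (hρ₁ : 0 < ρ₁) (hρ₂ : 0 < ρ₂) (hκ₂ : 0 < κ₂)
    (κ ρ₃ α : ℝ)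
    (hρ₃ : ρ₃ = (ρ₁ + ρ₂) / 2)
    (hα : α = (ρ₂ - ρ₁) / (ρ₂ + ρ₁))
    (ω : ℂ)
    (hω₁ : ρ₁ ≠ ρ₂ → 0 < κ → ω =
      ((((2 * κ) ^ (1 + α) : ℝ) / (κ₂ * (ρ₃ ^ α : ℝ)) : ℝ) : ℂ) *
        (Complex.Gamma (-(α : ℂ)) / Complex.Gamma (1 + (α : ℂ))) *
        (Complex.Gamma (1 + ((α : ℂ) / 2) * (1 + Complex.I * (κ₃ : ℂ) / (κ : ℂ))) /
          Complex.Gamma (-((α : ℂ) / 2) * (1 - Complex.I * (κ₃ : ℂ) / (κ : ℂ)))))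
    (hω₃ : ρ₁ = ρ₂ → ω = ((κ : ℂ) - Complex.I * (κ₃ : ℂ)) / (κ₂ : ℂ)) :
    (ρ₁ ≠ ρ₂ → 0 < κ →
        Complex.arg ω =
          -Real.arctan (Real.tan (π / 2 * (1 - |α|)) *
            Real.tanh (π * |α| * κ₃ / (2 * κ)))) ∧
    (ρ₁ = ρ₂ → 0 < κ → Complex.arg ω = -Real.arctan (κ₃ / κ)) ∧
    (ρ₁ = ρ₂ → κ = 0 →
        Complex.arg ω = -Real.sign κ₃ * (π / 2) * (1 - |α|)) := by
  refine ⟨fun hne hκpos => ?_, fun heq hκpos => ?_, fun heq hκ0 => ?_⟩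
  · have hα0 : α ≠ 0 := hα ▸ div_ne_zero (sub_ne_zero.2 hne.symm) (by positivity)
    have hα1 : |α| < 1 := hα ▸ abs_sub_div_add_lt_one hρ₁ hρ₂
    have hc : 0 < (2 * κ) ^ (1 + α) / (κ₂ * ρ₃ ^ α) := by
      have : 0 < ρ₃ := by rw [hρ₃]; positivity
      positivity
    rw [hω₁ hne hκpos, mul_div_assoc Complex.I, ← Complex.ofReal_div,
      Complex.arg_mul_Gamma_one_add_div_Gamma_neg_of_half_mul hα0 hα1 hc]
    congr 3
    field_simp
  · rw [hω₃ heq, Complex.arg_div_ofReal_of_pos hκ₂,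
      Complex.arg_eq_arctan_of_re_pos (by simpa using hκpos)]
    simp [neg_div, Real.arctan_neg]
  · have hα0 : α = 0 := by rw [hα, heq, sub_self, zero_div]
    rw [hω₃ heq, Complex.arg_div_ofReal_of_pos hκ₂, hκ0, hα0, Complex.ofReal_zero, zero_sub,
      Complex.arg_neg_I_mul_ofReal]
    simp

theorem stmt14 (ρ₁ ρ₂ κ₁ κ₂ κ₃ : ℝ)
    (hρ₁ : 0 < ρ₁) (hρ₂ : 0 < ρ₂) (hκ₁ : 0 < κ₁) (hκ₂ : 0 < κ₂)
    (hκ₃ : κ₃ ^ 2 ≤ κ₁ * κ₂)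
    (κ ρ₃ α : ℝ)
    (hκ : κ = Real.sqrt (κ₁ * κ₂ - κ₃ ^ 2))
    (hρ₃ : ρ₃ = (ρ₁ + ρ₂) / 2)
    (hα : α = (ρ₂ - ρ₁) / (ρ₂ + ρ₁))
    (ω : ℂ)
    (hω₁ : ρ₁ ≠ ρ₂ → 0 < κ → ω =
      ((((2 * κ) ^ (1 + α) : ℝ) / (κ₂ * (ρ₃ ^ α : ℝ)) : ℝ) : ℂ) *
        (Complex.Gamma (-(α : ℂ)) / Complex.Gamma (1 + (α : ℂ))) *
        (Complex.Gamma (1 + ((α : ℂ) / 2) * (1 + Complex.I * (κ₃ : ℂ) / (κ : ℂ))) /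
          Complex.Gamma (-((α : ℂ) / 2) * (1 - Complex.I * (κ₃ : ℂ) / (κ : ℂ)))))
    (hω₂ : ρ₁ ≠ ρ₂ → κ = 0 → ω =
      (Complex.I * (α : ℂ) * (κ₃ : ℂ)) ^ ((1 : ℂ) + (α : ℂ)) /
        ((κ₂ : ℂ) * ((ρ₃ ^ α : ℝ) : ℂ)) *
        (Complex.Gamma (-(α : ℂ)) / Complex.Gamma (1 + (α : ℂ))))
    (hω₃ : ρ₁ = ρ₂ → ω = ((κ : ℂ) - Complex.I * (κ₃ : ℂ)) / (κ₂ : ℂ)) :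
    (ρ₁ ≠ ρ₂ → 0 < κ →
        Complex.arg ω =
          -Real.arctan (Real.tan (π / 2 * (1 - |α|)) *
            Real.tanh (π * |α| * κ₃ / (2 * κ)))) ∧
    (ρ₁ = ρ₂ → 0 < κ → Complex.arg ω = -Real.arctan (κ₃ / κ)) ∧
    (ρ₁ = ρ₂ → κ = 0 →
        Complex.arg ω = -Real.sign κ₃ * (π / 2) * (1 - |α|)) :=
  stmt14_general ρ₁ ρ₂ κ₂ κ₃ hρ₁ hρ₂ hκ₂ κ ρ₃ α hρ₃ hα ω hω₁ hω₃
end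
end

section
/- Let α ∈ (−1,1) with α ≠ 0 and let t ∈ ℝ. Then the following identity of complex numbers holds: ( Γ(1 + (α/2)(1 + it)) / Γ(−(α/2)(1 − it)) ) · ( Γ(−α)/Γ(1+α) ) = ( |Γ(1 + (α/2)(1 + it))|² / Γ(1+α)² ) · ( sin( (πα/2)(1 − it) ) / sin(πα) ), where sin is the complex sine function. -/
open Real Set

noncomputable section

theorem stmt16 (α t : ℝ) (hα : α ∈ Ioo (-1 : ℝ) 1) (hα0 : α ≠ 0) :
    (Complex.Gamma (1 + ((α : ℂ) / 2) * (1 + Complex.I * (t : ℂ))) /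
        Complex.Gamma (-((α : ℂ) / 2) * (1 - Complex.I * (t : ℂ)))) *
      (Complex.Gamma (-(α : ℂ)) / Complex.Gamma (1 + (α : ℂ))) =
    (((‖Complex.Gamma (1 + ((α : ℂ) / 2) * (1 + Complex.I * (t : ℂ)))‖ ^ 2 : ℝ) : ℂ) /
        Complex.Gamma (1 + (α : ℂ)) ^ 2) *
      (Complex.sin (((π : ℂ) * (α : ℂ) / 2) * (1 - Complex.I * (t : ℂ))) /
        Complex.sin ((π : ℂ) * (α : ℂ))) := by
  obtain ⟨h1, h2⟩ := hα
  set z : ℂ := ((α : ℂ) / 2) * (1 + Complex.I * (t : ℂ)) with hz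
  set w : ℂ := ((α : ℂ) / 2) * (1 - Complex.I * (t : ℂ)) with hw
  have hπ : (π : ℂ) ≠ 0 := by
    exact_mod_cast Complex.ofReal_ne_zero.mpr Real.pi_ne_zero
  -- conj (1+z) = 1+w
  have hconj : (starRingEnd ℂ) (1 + z) = 1 + w := by
    simp only [hz, hw, map_add, map_mul, map_one, map_div₀, Complex.conj_I,
      Complex.conj_ofReal, map_ofNat]
    ring
  -- |Γ(1+z)|² = Γ(1+z)·Γ(1+w)
  have habs : ((‖Complex.Gamma (1 + z)‖ ^ 2 : ℝ) : ℂ)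
      = Complex.Gamma (1 + z) * Complex.Gamma (1 + w) := by
    rw [← hconj, Complex.Gamma_conj, Complex.mul_conj]
    norm_cast
    exact Complex.sq_norm _
  -- real/imag parts of w
  have hwre : w.re = α / 2 := by simp [hw]
  -- sin(π w) ≠ 0
  have hsinw : Complex.sin ((π : ℂ) * w) ≠ 0 := by
    rw [Ne, Complex.sin_eq_zero_iff]
    rintro ⟨k, hk⟩
    have hwk : w = (k : ℂ) := by
      have : (π : ℂ) * w = (π : ℂ) * k := by rw [hk]; ring
      exact mul_left_cancel₀ hπ this
    have hre : (α : ℝ) / 2 = (k : ℝ) := by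
      have := congrArg Complex.re hwk
      simpa [hwre] using this
    have hk1 : |(k : ℝ)| < 1 := by rw [← hre, abs_lt]; constructor <;> linarith
    have hk0 : k = 0 := by
      have : |k| < 1 := by exact_mod_cast (by push_cast; exact hk1 : (|k| : ℝ) < 1)
      rw [abs_lt] at this
      omega
    rw [hk0] at hre
    simp at hre
    exact hα0 (by linarith)
  -- sin(π α) ≠ 0
  have hsinα : Complex.sin ((π : ℂ) * (α : ℂ)) ≠ 0 := by
    rw [show ((π : ℂ) * (α : ℂ)) = ((π * α : ℝ) : ℂ) by push_cast; ring,
      ← Complex.ofReal_sin, Ne, Complex.ofReal_eq_zero]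
    rcases lt_or_gt_of_ne hα0 with h | h
    · have : Real.sin (π * (-α)) > 0 := by
        apply Real.sin_pos_of_pos_of_lt_pi
        · nlinarith [Real.pi_pos]
        · nlinarith [Real.pi_pos]
      rw [mul_neg, Real.sin_neg] at this
      linarith
    · have : Real.sin (π * α) > 0 := by
        apply Real.sin_pos_of_pos_of_lt_pi
        · nlinarith [Real.pi_pos]
        · nlinarith [Real.pi_pos]
      linarith
  -- Gammas nonzero
  have hΓ1w : Complex.Gamma (1 + w) ≠ 0 := by
    apply Complex.Gamma_ne_zero_of_re_pos
    simp only [Complex.add_re, Complex.one_re, hwre]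
    linarith
  have hΓ1α : Complex.Gamma (1 + (α : ℂ)) ≠ 0 := by
    apply Complex.Gamma_ne_zero_of_re_pos
    simp only [Complex.add_re, Complex.one_re, Complex.ofReal_re]
    linarith
  -- reflection for w
  have hGwp : Complex.Gamma (-w) * (Complex.sin ((π : ℂ) * w) * Complex.Gamma (1 + w)) = -(π : ℂ) := by
    have h := Complex.Gamma_mul_Gamma_one_sub (-w)
    rw [show (1 : ℂ) - -w = 1 + w by ring, show (π : ℂ) * -w = -((π : ℂ) * w) by ring,
      Complex.sin_neg, div_neg] at h
    calc Complex.Gamma (-w) * (Complex.sin ((π : ℂ) * w) * Complex.Gamma (1 + w))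
        = Complex.Gamma (-w) * Complex.Gamma (1 + w) * Complex.sin ((π : ℂ) * w) := by ring
      _ = -((π : ℂ) / Complex.sin ((π : ℂ) * w)) * Complex.sin ((π : ℂ) * w) := by rw [h]
      _ = -(π : ℂ) := by rw [neg_mul, div_mul_cancel₀ _ hsinw]
  have hGw : Complex.Gamma (-w) = -(π : ℂ) / (Complex.sin ((π : ℂ) * w) * Complex.Gamma (1 + w)) :=
    (eq_div_iff (mul_ne_zero hsinw hΓ1w)).mpr hGwp
  -- reflection for α
  have hGαp : Complex.Gamma (-(α : ℂ)) * (Complex.sin ((π : ℂ) * (α : ℂ)) * Complex.Gamma (1 + (α : ℂ))) = -(π : ℂ) := by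
    have h := Complex.Gamma_mul_Gamma_one_sub (-(α : ℂ))
    rw [show (1 : ℂ) - -(α : ℂ) = 1 + (α : ℂ) by ring,
      show (π : ℂ) * -(α : ℂ) = -((π : ℂ) * (α : ℂ)) by ring, Complex.sin_neg, div_neg] at h
    calc Complex.Gamma (-(α : ℂ)) * (Complex.sin ((π : ℂ) * (α : ℂ)) * Complex.Gamma (1 + (α : ℂ)))
        = Complex.Gamma (-(α : ℂ)) * Complex.Gamma (1 + (α : ℂ)) * Complex.sin ((π : ℂ) * (α : ℂ)) := by ring
      _ = -((π : ℂ) / Complex.sin ((π : ℂ) * (α : ℂ))) * Complex.sin ((π : ℂ) * (α : ℂ)) := by rw [h]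
      _ = -(π : ℂ) := by rw [neg_mul, div_mul_cancel₀ _ hsinα]
  have hGα : Complex.Gamma (-(α : ℂ)) = -(π : ℂ) / (Complex.sin ((π : ℂ) * (α : ℂ)) * Complex.Gamma (1 + (α : ℂ))) :=
    (eq_div_iff (mul_ne_zero hsinα hΓ1α)).mpr hGαp
  have hargs : -((α : ℂ) / 2) * (1 - Complex.I * (t : ℂ)) = -w := by rw [hw]; ring
  have hargsin : ((π : ℂ) * (α : ℂ) / 2) * (1 - Complex.I * (t : ℂ)) = (π : ℂ) * w := by
    rw [hw]; ring
  rw [hargs, hargsin, habs, hGw, hGα]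
  field_simp
end
end

section
/- Let m₁, m₂ : (0,∞) → (0,∞) be functions with m₁(t) + m₂(t) = t for all t ∈ (0,1). Assume that for j = 1,2 the function m_j is either regularly varying at 0 with index ρ_j ∈ (0,∞) or rapidly varying at 0 (in which case set ρ_j = ∞). Then min{ρ₁, ρ₂} = 1 (in particular, at least one of ρ₁, ρ₂ is finite and equal to 1). -/
open MeasureTheory Filter Set Topology Real

open scoped ENNReal

noncomputable section

/-!
Both indices are at least `1`: since `m_j(t) < t`, the quotient `a(t) = m_j(t)/t` is bounded near
`0`, whereas an index `ρ < 1` would give `a(t/2) ≥ c · a(t)` near `0` for some `c > 1`, and iterating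
along `t/2ⁿ` makes `a` unbounded. If both indices exceeded `1`, then near `0` we would have
`m_j(t/2) < m_j(t)/2` for `j = 1, 2`, and adding gives `t/2 < t/2`.
-/

lemma not_eventually_le_of_tendsto_ratio {g : ℝ → ℝ} {l c : ℝ} (B : ℝ)
    (hl₀ : 0 < l) (hl₁ : l ≤ 1) (hpos : ∀ᶠ t in 𝓝[>] (0:ℝ), 0 < g t)
    (hg : Tendsto (fun t => g (l * t) / g t) (𝓝[>] (0:ℝ)) (𝓝 c)) (hc : 1 < c) :
    ¬ ∀ᶠ t in 𝓝[>] (0:ℝ), g t ≤ B := by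
  intro hB
  obtain ⟨c', hc'₁, hc'c⟩ := exists_between hc
  obtain ⟨u, hu, hsub⟩ := mem_nhdsGT_iff_exists_Ioo_subset.1
    (hpos.and ((hg.eventually (eventually_gt_nhds hc'c)).and hB))
  have hu₀ : (0:ℝ) < u := hu
  have hmem : ∀ n : ℕ, l ^ n * (u / 2) ∈ Ioo 0 u := fun n =>
    ⟨by positivity, by nlinarith [pow_le_one₀ hl₀.le hl₁ (n := n)]⟩
  have hgrow : ∀ n : ℕ, c' ^ n * g (u / 2) ≤ g (l ^ n * (u / 2)) := by
    intro n
    induction n with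
    | zero => simp
    | succ n ih =>
      obtain ⟨hgpos, hratio, -⟩ := hsub (hmem n)
      have hstep : c' * g (l ^ n * (u / 2)) ≤ g (l * (l ^ n * (u / 2))) :=
        ((lt_div_iff₀ hgpos).1 hratio).le
      calc c' ^ (n + 1) * g (u / 2) = c' * (c' ^ n * g (u / 2)) := by ring
        _ ≤ c' * g (l ^ n * (u / 2)) := by gcongr
        _ ≤ g (l ^ (n + 1) * (u / 2)) := by rwa [pow_succ', mul_assoc]
  have hunbdd : Tendsto (fun n : ℕ => c' ^ n * g (u / 2)) atTop atTop :=
    (tendsto_pow_atTop_atTop_of_one_lt hc'₁).atTop_mul_const (hsub ⟨by positivity, by linarith⟩).1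
  obtain ⟨n, hn⟩ := (hunbdd.eventually_gt_atTop B).exists
  exact (hn.trans_le (hgrow n)).not_ge (hsub (hmem n)).2.2

lemma RegVaryAt0.one_le_of_isBigO {m : ℝ → ℝ} {ρ : ℝ} (h : RegVaryAt0 m ρ)
    (hpos : ∀ᶠ t in 𝓝[>] (0:ℝ), 0 < m t) (hO : m =O[𝓝[>] (0:ℝ)] id) : 1 ≤ ρ := by
  by_contra! hρ
  obtain ⟨C, hC⟩ := hO.bound
  have hpos' : ∀ᶠ t in 𝓝[>] (0:ℝ), 0 < t ∧ 0 < m t :=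
    (eventually_mem_nhdsWithin (a := (0:ℝ)) (s := Ioi 0)).and hpos
  have hratio : Tendsto (fun t => m (1 / 2 * t) / (1 / 2 * t) / (m t / t)) (𝓝[>] (0:ℝ))
      (𝓝 (2 * (1 / 2 : ℝ) ^ ρ)) := by
    refine ((h (1 / 2) (by norm_num)).const_mul 2).congr' ?_
    filter_upwards [hpos'] with t ⟨ht, hmt⟩
    field_simp
  have hc : 1 < 2 * (1 / 2 : ℝ) ^ ρ := by
    have := Real.rpow_lt_rpow_of_exponent_gt (x := 1 / 2) (by norm_num) (by norm_num) hρ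
    rw [Real.rpow_one] at this
    linarith
  refine not_eventually_le_of_tendsto_ratio C (by norm_num) (by norm_num)
    (hpos'.mono fun t ⟨ht, hmt⟩ => div_pos hmt ht) hratio hc ?_
  filter_upwards [hpos', hC] with t ⟨ht, hmt⟩ hbound
  rw [Real.norm_of_nonneg hmt.le, id, Real.norm_of_nonneg ht.le] at hbound
  exact (div_le_iff₀ ht).2 hbound

lemma one_le_index_of_isBigO {m : ℝ → ℝ} {ρ : ℝ≥0∞}
    (hfin : ρ ≠ ⊤ → RegVaryAt0 m ρ.toReal)
    (hpos : ∀ᶠ t in 𝓝[>] (0:ℝ), 0 < m t) (hO : m =O[𝓝[>] (0:ℝ)] id) : 1 ≤ ρ := by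
  rcases eq_or_ne ρ ⊤ with rfl | hρ
  · exact le_top
  · rw [← ENNReal.ofReal_toReal hρ, ← ENNReal.ofReal_one]
    exact ENNReal.ofReal_le_ofReal ((hfin hρ).one_le_of_isBigO hpos hO)

lemma eventually_ratio_lt_of_one_lt_index {m : ℝ → ℝ} {ρ : ℝ≥0∞} (hρ : 1 < ρ)
    (hfin : ρ ≠ ⊤ → RegVaryAt0 m ρ.toReal) (hinf : ρ = ⊤ → RapidVaryAt0 m)
    {l : ℝ} (hl : l ∈ Ioo (0:ℝ) 1) :
    ∀ᶠ t in 𝓝[>] (0:ℝ), m (l * t) / m t < l := by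
  rcases eq_or_ne ρ ⊤ with rfl | hne
  · exact ((hinf rfl).1 l hl).eventually (eventually_lt_nhds hl.1)
  · have hρ' : 1 < ρ.toReal := by simpa using ENNReal.toReal_strict_mono hne hρ
    have hlt : l ^ ρ.toReal < l := by
      simpa using Real.rpow_lt_rpow_of_exponent_gt hl.1 hl.2 hρ'
    exact ((hfin hne) l hl.1).eventually (eventually_lt_nhds hlt)

lemma isBigO_id_of_add_eq {m₁ m₂ : ℝ → ℝ} (hm₁pos : ∀ t > (0:ℝ), 0 < m₁ t)
    (hm₂pos : ∀ t > (0:ℝ), 0 < m₂ t) (hsum : ∀ t ∈ Ioo (0:ℝ) 1, m₁ t + m₂ t = t) :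
    m₁ =O[𝓝[>] (0:ℝ)] id := by
  refine Asymptotics.IsBigO.of_bound' ?_
  filter_upwards [Ioo_mem_nhdsGT one_pos] with t ht
  rw [Real.norm_of_nonneg (hm₁pos t ht.1).le, id, Real.norm_of_nonneg ht.1.le]
  linarith [hsum t ht, hm₂pos t ht.1]

lemma false_of_add_eq_of_ratio_lt {m₁ m₂ : ℝ → ℝ} {l : ℝ} (hl : l ∈ Ioo (0:ℝ) 1)
    (hm₁pos : ∀ t > (0:ℝ), 0 < m₁ t) (hm₂pos : ∀ t > (0:ℝ), 0 < m₂ t)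
    (hsum : ∀ t ∈ Ioo (0:ℝ) 1, m₁ t + m₂ t = t)
    (h₁ : ∀ᶠ t in 𝓝[>] (0:ℝ), m₁ (l * t) / m₁ t < l)
    (h₂ : ∀ᶠ t in 𝓝[>] (0:ℝ), m₂ (l * t) / m₂ t < l) : False := by
  obtain ⟨t, ⟨hr₁, hr₂⟩, ht⟩ := ((h₁.and h₂).and (Ioo_mem_nhdsGT one_pos)).exists
  have hlt : l * t ∈ Ioo (0:ℝ) 1 := ⟨mul_pos hl.1 ht.1, by nlinarith [hl.2, ht.2, hl.1]⟩
  rw [div_lt_iff₀ (hm₁pos t ht.1)] at hr₁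
  rw [div_lt_iff₀ (hm₂pos t ht.1)] at hr₂
  refine lt_irrefl (l * t) ?_
  calc l * t = m₁ (l * t) + m₂ (l * t) := (hsum (l * t) hlt).symm
    _ < l * m₁ t + l * m₂ t := add_lt_add hr₁ hr₂
    _ = l * t := by rw [← mul_add, hsum t ht]

theorem stmt17_general (m₁ m₂ : ℝ → ℝ)
    (hm₁pos : ∀ t > (0:ℝ), 0 < m₁ t) (hm₂pos : ∀ t > (0:ℝ), 0 < m₂ t)
    (hsum : ∀ t ∈ Ioo (0:ℝ) 1, m₁ t + m₂ t = t)
    (ρ₁ ρ₂ : ℝ≥0∞)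
    (h₁fin : ρ₁ ≠ ⊤ → RegVaryAt0 m₁ ρ₁.toReal)
    (h₁inf : ρ₁ = ⊤ → RapidVaryAt0 m₁)
    (h₂fin : ρ₂ ≠ ⊤ → RegVaryAt0 m₂ ρ₂.toReal)
    (h₂inf : ρ₂ = ⊤ → RapidVaryAt0 m₂) :
    min ρ₁ ρ₂ = 1 := by
  have hsum' : ∀ t ∈ Ioo (0:ℝ) 1, m₂ t + m₁ t = t := fun t ht => by rw [add_comm, hsum t ht]
  have h₁ : 1 ≤ ρ₁ := one_le_index_of_isBigO h₁fin
    (eventually_nhdsWithin_of_forall hm₁pos) (isBigO_id_of_add_eq hm₁pos hm₂pos hsum)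
  have h₂ : 1 ≤ ρ₂ := one_le_index_of_isBigO h₂fin
    (eventually_nhdsWithin_of_forall hm₂pos) (isBigO_id_of_add_eq hm₂pos hm₁pos hsum')
  refine le_antisymm ?_ (le_min h₁ h₂)
  by_contra! hlt
  rw [lt_min_iff] at hlt
  have hhalf : (1 / 2 : ℝ) ∈ Ioo 0 1 := by norm_num
  exact false_of_add_eq_of_ratio_lt hhalf hm₁pos hm₂pos hsum
    (eventually_ratio_lt_of_one_lt_index hlt.1 h₁fin h₁inf hhalf)
    (eventually_ratio_lt_of_one_lt_index hlt.2 h₂fin h₂inf hhalf)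

theorem stmt17 (m₁ m₂ : ℝ → ℝ)
    (hmeas₁ : Measurable m₁) (hmeas₂ : Measurable m₂)
    (hm₁pos : ∀ t > (0:ℝ), 0 < m₁ t) (hm₂pos : ∀ t > (0:ℝ), 0 < m₂ t)
    (hsum : ∀ t ∈ Ioo (0:ℝ) 1, m₁ t + m₂ t = t)
    (ρ₁ ρ₂ : ℝ≥0∞) (hρ₁pos : 0 < ρ₁) (hρ₂pos : 0 < ρ₂)
    (h₁fin : ρ₁ ≠ ⊤ → RegVaryAt0 m₁ ρ₁.toReal)
    (h₁inf : ρ₁ = ⊤ → RapidVaryAt0 m₁)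
    (h₂fin : ρ₂ ≠ ⊤ → RegVaryAt0 m₂ ρ₂.toReal)
    (h₂inf : ρ₂ = ⊤ → RapidVaryAt0 m₂) :
    min ρ₁ ρ₂ = 1 :=
  stmt17_general m₁ m₂ hm₁pos hm₂pos hsum ρ₁ ρ₂ h₁fin h₁inf h₂fin h₂inf
end
end

section
/- Let H = [[h₁,h₃],[h₃,h₂]] be a Hamiltonian on (0,∞) and set m_j(t) = ∫₀ᵗ h_j(s) ds for j = 1,2,3. Assume m₁(t) > 0 and m₂(t) > 0 for every t > 0 (i.e. neither h₁ nor h₂ vanishes a.e. on any neighbourhood of 0). If m₁ is regularly varying at 0 with index ρ₁ ∈ (0,∞) and m₂ is rapidly varying at 0 (index ∞), then lim_{t→0⁺} m₃(t)/√(m₁(t)·m₂(t)) = 0. -/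
open MeasureTheory Filter Set Topology Real

noncomputable section

/-!
The quadratic form of a positive semidefinite `2×2` matrix is nonnegative, and so is that of
`∫ H` over any interval; its discriminant gives
`(m₃(b) - m₃(a))² ≤ (m₁(b) - m₁(a))(m₂(b) - m₂(a))`.
Splitting `(0,t]` at `lt` and dividing by `√(m₁(t) m₂(t))` yields
`|m₃ / √(m₁ m₂)|(t) ≤ √(r₁ r₂) + √((1 - r₁)(1 - r₂))` with `rⱼ = mⱼ(lt)/mⱼ(t)`.
As `t → 0` we have `r₁ → l^ρ₁` and `r₂ → 0`, so the right side tends to `√(1 - l^ρ₁)`,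
which is arbitrarily small for `l` close to `1`.
-/

lemma Matrix.PosSemidef.fin_two_quadratic_nonneg {M : Matrix (Fin 2) (Fin 2) ℝ}
    (hM : M.PosSemidef) (x : ℝ) : 0 ≤ M 0 0 * (x * x) + 2 * M 0 1 * x + M 1 1 := by
  have hsymm : M 1 0 = M 0 1 := by simpa using hM.1.apply 0 1
  have h := hM.dotProduct_mulVec_nonneg ![x, 1]
  simp only [dotProduct, Matrix.mulVec, Fin.sum_univ_two, Matrix.cons_val_zero,
    Matrix.cons_val_one, Pi.star_apply, star_trivial, hsymm] at h
  linarith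

lemma sq_integral_offDiag_le_of_posSemidef {α : Type*} [MeasurableSpace α] {μ : Measure α}
    {H : α → Matrix (Fin 2) (Fin 2) ℝ} (hint : ∀ i j, Integrable (fun t => H t i j) μ)
    (hpsd : ∀ᵐ t ∂μ, (H t).PosSemidef) :
    (∫ t, H t 0 1 ∂μ) ^ 2 ≤ (∫ t, H t 0 0 ∂μ) * ∫ t, H t 1 1 ∂μ := by
  have hform : ∀ x : ℝ, 0 ≤ (∫ t, H t 0 0 ∂μ) * (x * x) + 2 * (∫ t, H t 0 1 ∂μ) * x +
      ∫ t, H t 1 1 ∂μ := by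
    intro x
    calc (0 : ℝ) ≤ ∫ t, H t 0 0 * (x * x) + 2 * H t 0 1 * x + H t 1 1 ∂μ :=
          integral_nonneg_of_ae <| hpsd.mono fun t ht => ht.fin_two_quadratic_nonneg x
      _ = _ := by
          have h₀₀ := (hint 0 0).mul_const (x * x)
          have h₀₁ := ((hint 0 1).const_mul 2).mul_const x
          have h₀ : Integrable (fun t => H t 0 0 * (x * x) + 2 * H t 0 1 * x) μ := h₀₀.add h₀₁
          rw [integral_add h₀ (hint 1 1), integral_add h₀₀ h₀₁, integral_mul_const,
            integral_mul_const, integral_const_mul]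
  have := discrim_le_zero hform
  rw [discrim] at this
  linarith

namespace IsHamiltonian

variable {H : ℝ → Matrix (Fin 2) (Fin 2) ℝ}

lemma integrableOn_Ioc (hH : IsHamiltonian H) (i j : Fin 2) {a b : ℝ} (ha : 0 ≤ a) :
    IntegrableOn (fun t => H t i j) (Ioc a b) := by
  rcases le_or_gt b a with hba | hab
  · simp [Ioc_eq_empty_of_le hba]
  · exact (hH.2.1 b (ha.trans_lt hab) i j).mono_set (Ioc_subset_Ioc_left ha)

lemma setIntegral_Ioc_sub (hH : IsHamiltonian H) (i j : Fin 2) {a b : ℝ} (ha : 0 ≤ a)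
    (hab : a ≤ b) :
    (∫ t in Ioc 0 b, H t i j) - ∫ t in Ioc 0 a, H t i j = ∫ t in Ioc a b, H t i j := by
  rw [sub_eq_iff_eq_add', ← setIntegral_union (Ioc_disjoint_Ioc_of_le le_rfl) measurableSet_Ioc
    (hH.integrableOn_Ioc i j le_rfl) (hH.integrableOn_Ioc i j ha), Ioc_union_Ioc_eq_Ioc ha hab]

lemma sq_setIntegral_Ioc_offDiag_le (hH : IsHamiltonian H) {a b : ℝ} (ha : 0 ≤ a) :
    (∫ t in Ioc a b, H t 0 1) ^ 2 ≤ (∫ t in Ioc a b, H t 0 0) * ∫ t in Ioc a b, H t 1 1 :=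
  sq_integral_offDiag_le_of_posSemidef (fun i j => hH.integrableOn_Ioc i j ha) <|
    (ae_restrict_iff' measurableSet_Ioc).2 <|
      hH.2.2.1.mono fun _ ht hmem => (ht (ha.trans_lt hmem.1)).1

end IsHamiltonian

lemma abs_add_div_sqrt_mul_le {A₁ A₂ C₁ C₂ e₁ e₂ : ℝ} (hC₁ : 0 < C₁) (hC₂ : 0 < C₂)
    (he₁ : e₁ ^ 2 ≤ A₁ * A₂) (he₂ : e₂ ^ 2 ≤ (C₁ - A₁) * (C₂ - A₂)) :
    |(e₁ + e₂) / √(C₁ * C₂)| ≤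
      √(A₁ / C₁ * (A₂ / C₂)) + √((1 - A₁ / C₁) * (1 - A₂ / C₂)) := by
  have hC : 0 ≤ C₁ * C₂ := by positivity
  have h₁ : A₁ / C₁ * (A₂ / C₂) = A₁ * A₂ / (C₁ * C₂) := div_mul_div_comm _ _ _ _
  have h₂ : (1 - A₁ / C₁) * (1 - A₂ / C₂) = (C₁ - A₁) * (C₂ - A₂) / (C₁ * C₂) := by
    field_simp
  rw [h₁, h₂, sqrt_div' _ hC, sqrt_div' _ hC, ← add_div, abs_div, abs_of_nonneg (sqrt_nonneg _)]
  gcongr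
  exact (abs_add_le _ _).trans (add_le_add (abs_le_sqrt he₁) (abs_le_sqrt he₂))

lemma tendsto_zero_of_abs_le_sqrt_ratios {ι : Type*} {L : Filter ι} {f : ι → ℝ}
    {r₁ r₂ : ℝ → ι → ℝ} {φ : ℝ → ℝ} (hφ : Tendsto φ (𝓝[<] 1) (𝓝 1))
    (hr₁ : ∀ l ∈ Ioo (0:ℝ) 1, Tendsto (r₁ l) L (𝓝 (φ l)))
    (hr₂ : ∀ l ∈ Ioo (0:ℝ) 1, Tendsto (r₂ l) L (𝓝 0))
    (hf : ∀ l ∈ Ioo (0:ℝ) 1, ∀ᶠ i in L,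
      |f i| ≤ √(r₁ l i * r₂ l i) + √((1 - r₁ l i) * (1 - r₂ l i))) :
    Tendsto f L (𝓝 0) := by
  rw [Metric.tendsto_nhds]
  intro ε hε
  obtain ⟨l, hφl, hl⟩ : ∃ l, 1 - ε ^ 2 < φ l ∧ l ∈ Ioo (0:ℝ) 1 :=
    ((hφ.eventually_const_lt (by nlinarith)).and
      (Ioo_mem_nhdsLT (by norm_num : (0:ℝ) < 1))).exists
  have hlim : Tendsto (fun i => √(r₁ l i * r₂ l i) + √((1 - r₁ l i) * (1 - r₂ l i))) L
      (𝓝 (√(φ l * 0) + √((1 - φ l) * (1 - 0)))) :=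
    ((hr₁ l hl).mul (hr₂ l hl)).sqrt.add
      (((tendsto_const_nhds.sub (hr₁ l hl)).mul (tendsto_const_nhds.sub (hr₂ l hl))).sqrt)
  have hsmall : √(φ l * 0) + √((1 - φ l) * (1 - 0)) < ε := by
    rw [mul_zero, sqrt_zero, zero_add, sub_zero, mul_one, sqrt_lt' hε]
    linarith
  filter_upwards [hf l hl, hlim.eventually_lt_const hsmall] with i hfi hi
  rw [Real.dist_eq, sub_zero]
  exact hfi.trans_lt hi

theorem stmt18_general (H : ℝ → Matrix (Fin 2) (Fin 2) ℝ) (hH : IsHamiltonian H)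
    (m₁ m₂ m₃ : ℝ → ℝ)
    (hm₁ : ∀ t, m₁ t = ∫ s in Ioc (0:ℝ) t, H s 0 0)
    (hm₂ : ∀ t, m₂ t = ∫ s in Ioc (0:ℝ) t, H s 1 1)
    (hm₃ : ∀ t, m₃ t = ∫ s in Ioc (0:ℝ) t, H s 0 1)
    (hm₁pos : ∀ t > (0:ℝ), 0 < m₁ t) (hm₂pos : ∀ t > (0:ℝ), 0 < m₂ t)
    (ρ₁ : ℝ) (hrv₁ : RegVaryAt0 m₁ ρ₁)
    (hrapid₂ : RapidVaryAt0 m₂) :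
    Tendsto (fun t => m₃ t / Real.sqrt (m₁ t * m₂ t)) (𝓝[>] (0:ℝ)) (𝓝 0) := by
  have hsq₀ : ∀ a, m₃ a ^ 2 ≤ m₁ a * m₂ a := fun a => by
    simpa only [hm₁, hm₂, hm₃] using hH.sq_setIntegral_Ioc_offDiag_le (b := a) le_rfl
  have hsq : ∀ a b, 0 ≤ a → a ≤ b →
      (m₃ b - m₃ a) ^ 2 ≤ (m₁ b - m₁ a) * (m₂ b - m₂ a) := by
    intro a b ha hab
    simp only [hm₁, hm₂, hm₃, hH.setIntegral_Ioc_sub _ _ ha hab]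
    exact hH.sq_setIntegral_Ioc_offDiag_le ha
  have hφ : Tendsto (fun l : ℝ => l ^ ρ₁) (𝓝[<] 1) (𝓝 1) := by
    simpa using ((continuousAt_rpow_const 1 ρ₁ (Or.inl one_ne_zero)).tendsto).mono_left
      nhdsWithin_le_nhds
  refine tendsto_zero_of_abs_le_sqrt_ratios hφ (fun l hl => hrv₁ l hl.1) hrapid₂.1 ?_
  intro l hl
  filter_upwards [self_mem_nhdsWithin] with t (ht : 0 < t)
  have hlt : 0 < l * t := mul_pos hl.1 ht
  simpa using abs_add_div_sqrt_mul_le (hm₁pos t ht) (hm₂pos t ht) (hsq₀ (l * t))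
    (hsq (l * t) t hlt.le (mul_le_of_le_one_left ht.le hl.2.le))

theorem stmt18 (H : ℝ → Matrix (Fin 2) (Fin 2) ℝ) (hH : IsHamiltonian H)
    (m₁ m₂ m₃ : ℝ → ℝ)
    (hm₁ : ∀ t, m₁ t = ∫ s in Ioc (0:ℝ) t, H s 0 0)
    (hm₂ : ∀ t, m₂ t = ∫ s in Ioc (0:ℝ) t, H s 1 1)
    (hm₃ : ∀ t, m₃ t = ∫ s in Ioc (0:ℝ) t, H s 0 1)
    (hm₁pos : ∀ t > (0:ℝ), 0 < m₁ t) (hm₂pos : ∀ t > (0:ℝ), 0 < m₂ t)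
    (ρ₁ : ℝ) (hρ₁ : 0 < ρ₁) (hrv₁ : RegVaryAt0 m₁ ρ₁)
    (hrapid₂ : RapidVaryAt0 m₂) :
    Tendsto (fun t => m₃ t / Real.sqrt (m₁ t * m₂ t)) (𝓝[>] (0:ℝ)) (𝓝 0) :=
  stmt18_general H hH m₁ m₂ m₃ hm₁ hm₂ hm₃ hm₁pos hm₂pos ρ₁ hrv₁ hrapid₂
end
end
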